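/- arXiv:2205.13078 — 8 statements merged into one kernel-verified Lean document; each statement's English description precedes it below -/
import Mathlib

section
/- Let X be a locally compact Hausdorff space and let f ∈ C₀(X). Then f is a left-symmetric point of C₀(X) if and only if either f is identically zero, or there exists x₀ ∈ X such that M_f = {x₀} and f(x) = 0 for every x ≠ x₀. -/
/-!
If `f` vanishes off `x₀` and `f ⊥ g`, then `g` cannot attain its norm at `x₀`: otherwise
`f - (f x₀ / 2 g x₀) • g` has norm at most `‖f‖ / 2`. So `g` attains its norm at a zero of `f`,
which gives `g ⊥ f`. Conversely, if `f` attains its norm at `z` and `f y ≠ 0` for some `y ≠ z`,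
take an Urysohn bump `g` with `g y = 1`, vanishing at `z` and supported where `f / f y` is close
to `1`. Then `f ⊥ g`, but subtracting a small multiple of `f / f y` from `g` brings its norm
below `1 ≤ ‖g‖`, so `f` is not left-symmetric.
-/

open scoped ZeroAtInfty
open Filter Set Topology

section BirkhoffJames

variable (𝕜 : Type*) {E : Type*} [NormedField 𝕜] [NormedAddCommGroup E] [NormedSpace 𝕜 E]

def IsBirkhoffOrthogonal (x y : E) : Prop :=
  ∀ c : 𝕜, ‖x‖ ≤ ‖x + c • y‖

def IsLeftSymmetric (x : E) : Prop :=
  ∀ y : E, IsBirkhoffOrthogonal 𝕜 x y → IsBirkhoffOrthogonal 𝕜 y x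

variable {𝕜}

theorem isBirkhoffOrthogonal_zero_left (y : E) : IsBirkhoffOrthogonal 𝕜 0 y := fun _ => by
  simp

theorem isBirkhoffOrthogonal_zero_right (x : E) : IsBirkhoffOrthogonal 𝕜 x 0 := fun _ => by
  simp

theorem isLeftSymmetric_zero : IsLeftSymmetric 𝕜 (0 : E) := fun y _ =>
  isBirkhoffOrthogonal_zero_right y

end BirkhoffJames

namespace ZeroAtInftyContinuousMap

variable {X E : Type*} [TopologicalSpace X] [NormedAddCommGroup E]

theorem norm_apply_le (f : C₀(X, E)) (x : X) : ‖f x‖ ≤ ‖f‖ :=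
  f.toBCF.norm_coe_le_norm x

theorem norm_le_of_forall_le {f : C₀(X, E)} {C : ℝ} (hC : 0 ≤ C) (h : ∀ x, ‖f x‖ ≤ C) :
    ‖f‖ ≤ C :=
  (BoundedContinuousFunction.norm_le hC).2 h

theorem exists_norm_apply_eq_norm {f : C₀(X, E)} (hf : f ≠ 0) : ∃ x, ‖f x‖ = ‖f‖ := by
  obtain ⟨x₁, hx₁⟩ : ∃ x, f x ≠ 0 := not_forall.1 fun h => hf (ext h)
  have hf0 : Tendsto (‖f ·‖) (cocompact X) (𝓝 0) := by simpa using (zero_at_infty f).norm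
  have hsmall : ∀ᶠ x in cocompact X, ‖f x‖ ≤ ‖f x₁‖ :=
    (hf0.eventually_lt_const (norm_pos_iff.2 hx₁)).mono fun _ => le_of_lt
  obtain ⟨x, hx⟩ := (map_continuous f).norm.exists_forall_ge' x₁ hsmall
  exact ⟨x, le_antisymm (f.norm_apply_le x) (norm_le_of_forall_le (norm_nonneg _) hx)⟩

theorem isBirkhoffOrthogonal_of_apply_eq_zero {𝕜 : Type*} [NormedField 𝕜] [NormedSpace 𝕜 E]
    {f g : C₀(X, E)} {x : X} (hf : ‖f x‖ = ‖f‖) (hg : g x = 0) : IsBirkhoffOrthogonal 𝕜 f g := fun c =>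
  calc ‖f‖ = ‖(f + c • g) x‖ := by simp [hg, hf]
    _ ≤ ‖f + c • g‖ := norm_apply_le _ x

theorem setOf_norm_apply_eq_norm_eq_singleton {f : C₀(X, E)} (hf : f ≠ 0) {x₀ : X}
    (hx₀ : ‖f x₀‖ = ‖f‖) (hvanish : ∀ x ≠ x₀, f x = 0) : {x | ‖f x‖ = ‖f‖} = {x₀} := by
  ext x
  refine ⟨fun hx => ?_, fun hx => hx ▸ hx₀⟩
  by_contra hxx₀
  exact hf (norm_eq_zero.1 (by simpa [hvanish x hxx₀, eq_comm] using hx))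

section RCLike

variable {𝕜 : Type*} [RCLike 𝕜]

theorem exists_ofReal_bump [RegularSpace X] [LocallyCompactSpace X] {W : Set X} (hW : IsOpen W)
    {y : X} (hy : y ∈ W) :
    ∃ g : C₀(X, 𝕜), g y = 1 ∧ (∀ x, ∃ r ∈ Icc (0 : ℝ) 1, g x = r) ∧ ∀ x ∉ W, g x = 0 := by
  obtain ⟨φ, hφy, hφW, hφc, hφ01⟩ := exists_continuous_one_zero_of_isCompact isCompact_singleton
    hW.isClosed_compl (disjoint_compl_right_iff_subset.2 (singleton_subset_iff.2 hy))
  refine ⟨⟨⟨fun x => (φ x : 𝕜), by fun_prop⟩,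
    (hφc.comp_left (g := ((↑) : ℝ → 𝕜)) RCLike.ofReal_zero).is_zero_at_infty⟩,
    ?_, fun x => ⟨φ x, hφ01 x, rfl⟩, fun x hx => ?_⟩
  · simp [hφy (mem_singleton y)]
  · simp [hφW hx]

theorem norm_sub_smul_le_of_bump {g h : C₀(X, 𝕜)} {t : ℝ} (ht0 : 0 ≤ t) (ht : t ≤ 1 / 2)
    (hth : t * ‖h‖ ≤ 1 / 2) (hg : ∀ x, ∃ r ∈ Icc (0 : ℝ) 1, g x = r)
    (hgh : ∀ x, 1 / 2 ≤ ‖h x - 1‖ → g x = 0) : ‖g - (t : 𝕜) • h‖ ≤ 1 - t / 2 := by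
  refine norm_le_of_forall_le (by linarith) fun x => ?_
  rw [sub_apply, smul_apply, smul_eq_mul]
  rcases lt_or_ge ‖h x - 1‖ (1 / 2) with hx | hx
  · obtain ⟨r, ⟨hr0, hr1⟩, hr⟩ := hg x
    have hrt : ‖((r - t : ℝ) : 𝕜)‖ ≤ 1 - t := by
      rw [RCLike.norm_ofReal, abs_le]; constructor <;> linarith
    have htx : ‖(t : 𝕜) * (h x - 1)‖ ≤ t / 2 := by
      rw [norm_mul, RCLike.norm_ofReal, abs_of_nonneg ht0]; nlinarith [norm_nonneg (h x - 1)]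
    calc ‖g x - t * h x‖ = ‖((r - t : ℝ) : 𝕜) - t * (h x - 1)‖ := by
          rw [hr]; push_cast; ring_nf
      _ ≤ (1 - t) + t / 2 := (norm_sub_le _ _).trans (add_le_add hrt htx)
      _ = 1 - t / 2 := by ring
  · calc ‖g x - t * h x‖ = t * ‖h x‖ := by
          rw [hgh x hx, zero_sub, norm_neg, norm_mul, RCLike.norm_ofReal, abs_of_nonneg ht0]
      _ ≤ t * ‖h‖ := mul_le_mul_of_nonneg_left (h.norm_apply_le x) ht0
      _ ≤ 1 - t / 2 := by linarith

theorem eq_zero_of_isBirkhoffOrthogonal {f g : C₀(X, 𝕜)} {x₀ : X} (hf : ∀ x ≠ x₀, f x = 0)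
    (hg : ‖g x₀‖ = ‖g‖) (hg0 : g ≠ 0) (hfg : IsBirkhoffOrthogonal 𝕜 f g) : f = 0 := by
  have hgx₀ : g x₀ ≠ 0 := norm_ne_zero_iff.1 (hg ▸ norm_ne_zero_iff.2 hg0)
  set c : 𝕜 := -(f x₀ / (2 * g x₀))
  have hc : ‖c‖ * ‖g‖ = ‖f x₀‖ / 2 := by
    rw [← hg, norm_neg, norm_div, norm_mul, RCLike.norm_two]
    field_simp [norm_ne_zero_iff.2 hgx₀]
  have hhalf : ‖f + c • g‖ ≤ ‖f‖ / 2 := by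
    refine norm_le_of_forall_le (by positivity) fun x => ?_
    rw [add_apply, smul_apply, smul_eq_mul]
    rcases eq_or_ne x x₀ with rfl | hx
    · calc ‖f x + c * g x‖ = ‖f x‖ / 2 := by
            rw [show f x + c * g x = f x / 2 by simp only [c]; field_simp; ring, norm_div,
              RCLike.norm_two]
        _ ≤ ‖f‖ / 2 := by linarith [f.norm_apply_le x]
    · calc ‖f x + c * g x‖ ≤ ‖c‖ * ‖g‖ := by
            rw [hf x hx, zero_add, norm_mul]
            exact mul_le_mul_of_nonneg_left (g.norm_apply_le x) (norm_nonneg c)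
        _ ≤ ‖f‖ / 2 := by linarith [f.norm_apply_le x₀]
  exact norm_le_zero_iff.1 (by linarith [hfg c, norm_nonneg f])

theorem isLeftSymmetric_of_forall_ne_apply_eq_zero {f : C₀(X, 𝕜)} {x₀ : X}
    (hf : ∀ x ≠ x₀, f x = 0) : IsLeftSymmetric 𝕜 f := by
  intro g hfg
  rcases eq_or_ne g 0 with rfl | hg0
  · exact isBirkhoffOrthogonal_zero_left f
  obtain ⟨y, hy⟩ := exists_norm_apply_eq_norm hg0
  rcases eq_or_ne y x₀ with rfl | hyx₀
  · rw [eq_zero_of_isBirkhoffOrthogonal hf hy hg0 hfg]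
    exact isBirkhoffOrthogonal_zero_right g
  · exact isBirkhoffOrthogonal_of_apply_eq_zero hy (hf y hyx₀)

theorem _root_.IsLeftSymmetric.apply_eq_zero [T2Space X] [LocallyCompactSpace X]
    {f : C₀(X, 𝕜)} (hf : IsLeftSymmetric 𝕜 f) {y z : X} (hz : ‖f z‖ = ‖f‖) (hyz : y ≠ z) :
    f y = 0 := by
  by_contra hy
  set h : C₀(X, 𝕜) := (f y)⁻¹ • f
  have hhy : h y = 1 := inv_mul_cancel₀ hy
  have hh : 1 ≤ ‖h‖ := by simpa [hhy] using h.norm_apply_le y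
  have hW : IsOpen ({x | ‖h x - 1‖ < 1 / 2} ∩ {z}ᶜ) :=
    (isOpen_lt (by fun_prop) continuous_const).inter isOpen_compl_singleton
  obtain ⟨g, hgy, hg01, hgW⟩ := exists_ofReal_bump (𝕜 := 𝕜) hW ⟨by simp [hhy], hyz⟩
  have hgf : IsBirkhoffOrthogonal 𝕜 g f :=
    hf g (isBirkhoffOrthogonal_of_apply_eq_zero hz (hgW z fun hz => hz.2 rfl))
  set t : ℝ := (2 * ‖h‖)⁻¹
  have ht0 : 0 < t := by positivity
  have hth : t * ‖h‖ = 1 / 2 := by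
    simp only [t]; field_simp [(zero_lt_one.trans_le hh).ne']
  have hsub : ‖g - (t : 𝕜) • h‖ ≤ 1 - t / 2 :=
    norm_sub_smul_le_of_bump ht0.le (by nlinarith) hth.le hg01
      fun x hx => hgW x fun hxW => hx.not_gt hxW.1
  have hg1 : 1 ≤ ‖g‖ := by simpa [hgy] using g.norm_apply_le y
  have := hgf (-(t * (f y)⁻¹ : 𝕜))
  rw [show g + -((t : 𝕜) * (f y)⁻¹) • f = g - (t : 𝕜) • h by
    ext x; simp [h, RCLike.real_smul_eq_coe_mul]; ring] at this
  linarith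

end RCLike

end ZeroAtInftyContinuousMap

open ZeroAtInftyContinuousMap in
/-- **Left-symmetric points of `C₀(X)`.**
For a locally compact Hausdorff space `X`, `f ∈ C₀(X, ℂ)` is a left-symmetric point for
Birkhoff-James orthogonality iff `f = 0`, or `M_f` is a singleton `{x₀}` and `f`
vanishes outside `x₀`. -/
theorem left_symmetric_points_C0 (X : Type*) [TopologicalSpace X] [T2Space X]
    [LocallyCompactSpace X] (f : C₀(X, ℂ)) :
    (∀ g : C₀(X, ℂ), (∀ c : ℂ, ‖f‖ ≤ ‖f + c • g‖) → (∀ c : ℂ, ‖g‖ ≤ ‖g + c • f‖)) ↔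
      (f = 0 ∨ ∃ x₀ : X, {x : X | ‖f x‖ = ‖f‖} = {x₀} ∧
        ∀ x : X, x ≠ x₀ → f x = 0) := by
  change IsLeftSymmetric ℂ f ↔ _
  refine ⟨fun hf => ?_, ?_⟩
  · rcases eq_or_ne f 0 with h0 | h0
    · exact Or.inl h0
    obtain ⟨x₀, hx₀⟩ := exists_norm_apply_eq_norm h0
    have hvanish : ∀ x ≠ x₀, f x = 0 := fun x hx => hf.apply_eq_zero hx₀ hx
    exact Or.inr ⟨x₀, setOf_norm_apply_eq_norm_eq_singleton h0 hx₀ hvanish, hvanish⟩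
  · rintro (rfl | ⟨x₀, -, hvanish⟩)
    · exact isLeftSymmetric_zero
    · exact isLeftSymmetric_of_forall_ne_apply_eq_zero hvanish
end

section
/- Let (X, Σ, λ) be a measure space, let f : X → ℂ be measurable and essentially bounded (i.e., the essential supremum of |f| with respect to λ is finite), and let U be a λ-ultrafilter on X. Then there exists z ∈ ℂ such that for every ε > 0 the set {x ∈ X : |f(x) − z| < ε} belongs to U. -/
open MeasureTheory

/-- A `μ`-filter on `X`: a nonempty collection of measurable subsets of positive measure,
closed under binary intersections and under measurable supersets. -/
def IsMeasFilter {X : Type*} [MeasurableSpace X] (μ : Measure X) (F : Set (Set X)) : Prop :=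
  F.Nonempty ∧
  (∀ A ∈ F, MeasurableSet A) ∧
  (∀ A ∈ F, 0 < μ A) ∧
  (∀ A ∈ F, ∀ B ∈ F, A ∩ B ∈ F) ∧
  (∀ A ∈ F, ∀ B : Set X, MeasurableSet B → A ⊆ B → B ∈ F)

/-- A `μ`-ultrafilter: a `μ`-filter which is maximal among `μ`-filters. -/
def IsMeasUltrafilter {X : Type*} [MeasurableSpace X] (μ : Measure X) (U : Set (Set X)) : Prop :=
  IsMeasFilter μ U ∧ ∀ F : Set (Set X), IsMeasFilter μ F → U ⊆ F → F = U

/-!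
A `μ`-ultrafilter `U` generates a genuine filter on `X`, which contains every conull set and
decides every measurable set. Pushing it forward along `f` gives a filter on `ℂ` living on a
compact ball, hence with a cluster point `z`. The preimage of an open neighbourhood of `z` is
measurable, so either it or its complement is in `U`, and the complement is ruled out because
`z` is a cluster point. Hence `f` tends to `z` along `U`.
-/

open Filter Topology

namespace IsMeasFilter

variable {X : Type*} [MeasurableSpace X] {μ : Measure X} {F : Set (Set X)}

theorem measure_pos (hF : IsMeasFilter μ F) {A : Set X} (hA : A ∈ F) : 0 < μ A :=
  hF.2.2.1 A hA

theorem inter_mem (hF : IsMeasFilter μ F) {A B : Set X} (hA : A ∈ F) (hB : B ∈ F) :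
    A ∩ B ∈ F :=
  hF.2.2.2.1 A hA B hB

def toFilter (hF : IsMeasFilter μ F) : Filter X where
  sets := {S | ∃ A ∈ F, A ⊆ S}
  univ_sets := hF.1.imp fun A hA => ⟨hA, Set.subset_univ A⟩
  sets_of_superset := fun ⟨A, hA, hAS⟩ hST => ⟨A, hA, hAS.trans hST⟩
  inter_sets := fun ⟨A, hA, hAS⟩ ⟨B, hB, hBT⟩ =>
    ⟨A ∩ B, hF.inter_mem hA hB, Set.inter_subset_inter hAS hBT⟩

theorem mem_toFilter_iff_of_measurableSet (hF : IsMeasFilter μ F) {S : Set X}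
    (hS : MeasurableSet S) : S ∈ hF.toFilter ↔ S ∈ F :=
  ⟨fun ⟨A, hA, hAS⟩ => hF.2.2.2.2 A hA S hS hAS, fun hS => ⟨S, hS, subset_rfl⟩⟩

theorem toFilter_neBot (hF : IsMeasFilter μ F) : hF.toFilter.NeBot :=
  forall_mem_nonempty_iff_neBot.1 fun _ ⟨_, hA, hAS⟩ =>
    (nonempty_of_measure_ne_zero (hF.measure_pos hA).ne').mono hAS

end IsMeasFilter

namespace IsMeasUltrafilter

variable {X : Type*} [MeasurableSpace X] {μ : Measure X} {U : Set (Set X)}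

/-- Adjoining `B` to `U` keeps positive measure, so by maximality `B` was already in `U`. -/
theorem mem_of_forall_measure_inter_pos (hU : IsMeasUltrafilter μ U) {B : Set X}
    (hB : MeasurableSet B) (h : ∀ A ∈ U, 0 < μ (A ∩ B)) : B ∈ U := by
  obtain ⟨⟨⟨A₀, hA₀⟩, hmeas, -, hinter, -⟩, hmax⟩ := hU
  let F : Set (Set X) := {C | MeasurableSet C ∧ ∃ A ∈ U, A ∩ B ⊆ C}
  have hUF : U ⊆ F := fun A hA => ⟨hmeas A hA, A, hA, Set.inter_subset_left⟩
  have hF : IsMeasFilter μ F := by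
    refine ⟨⟨A₀, hUF hA₀⟩, fun C hC => hC.1, ?_, ?_, ?_⟩
    · rintro C ⟨-, A, hA, hAC⟩
      exact (h A hA).trans_le (measure_mono hAC)
    · rintro C ⟨hC, A, hA, hAC⟩ C' ⟨hC', A', hA', hAC'⟩
      refine ⟨hC.inter hC', A ∩ A', hinter A hA A' hA', fun x hx => ?_⟩
      exact ⟨hAC ⟨hx.1.1, hx.2⟩, hAC' ⟨hx.1.2, hx.2⟩⟩
    · rintro C ⟨-, A, hA, hAC⟩ D hD hCD
      exact ⟨hD, A, hA, hAC.trans hCD⟩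
  rw [← hmax F hF hUF]
  exact ⟨hB, A₀, hA₀, Set.inter_subset_right⟩

theorem mem_or_compl_mem (hU : IsMeasUltrafilter μ U) {B : Set X} (hB : MeasurableSet B) :
    B ∈ U ∨ Bᶜ ∈ U := by
  by_cases h : ∀ A ∈ U, 0 < μ (A ∩ B)
  · exact Or.inl (hU.mem_of_forall_measure_inter_pos hB h)
  push Not at h
  obtain ⟨A₀, hA₀, hA₀B⟩ := h
  refine Or.inr (hU.mem_of_forall_measure_inter_pos hB.compl fun A hA => ?_)
  calc 0 < μ (A ∩ A₀) := hU.1.measure_pos (hU.1.inter_mem hA hA₀)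
    _ ≤ μ (A ∩ A₀ ∩ B) + μ ((A ∩ A₀) \ B) := measure_le_inter_add_sdiff μ _ _
    _ ≤ μ (A₀ ∩ B) + μ (A ∩ Bᶜ) := by
      gcongr
      · exact Set.inter_subset_right
      · exact Set.sdiff_subset_sdiff_left Set.inter_subset_left
    _ = μ (A ∩ Bᶜ) := by rw [nonpos_iff_eq_zero.1 hA₀B, zero_add]

theorem toFilter_le_ae (hU : IsMeasUltrafilter μ U) : hU.1.toFilter ≤ ae μ := by
  intro S hS
  obtain ⟨T, hST, hT, hT0⟩ := exists_measurable_superset_of_null (mem_ae_iff.1 hS)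
  have hTU : T ∉ U := fun hTU => (hU.1.measure_pos hTU).ne' hT0
  exact ⟨Tᶜ, (hU.mem_or_compl_mem hT).resolve_left hTU, Set.compl_subset_comm.1 hST⟩

theorem exists_tendsto_nhds_of_ae_mem_isCompact (hU : IsMeasUltrafilter μ U)
    {Y : Type*} [TopologicalSpace Y] [MeasurableSpace Y] [OpensMeasurableSpace Y]
    {f : X → Y} (hf : Measurable f) {K : Set Y} (hK : IsCompact K)
    (hfK : ∀ᵐ x ∂μ, f x ∈ K) : ∃ z ∈ K, Tendsto f hU.1.toFilter (𝓝 z) := by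
  have := hU.1.toFilter_neBot
  obtain ⟨z, hzK, hz⟩ := hK (le_principal_iff.2 (mem_map.2 (hU.toFilter_le_ae hfK)))
  refine ⟨z, hzK, fun V hV => ?_⟩
  obtain ⟨W, hWV, hW, hzW⟩ := mem_nhds_iff.1 hV
  refine mem_of_superset ?_ (Set.preimage_mono hWV)
  rcases hU.mem_or_compl_mem (hf hW.measurableSet) with hmem | hmem
  · exact (hU.1.mem_toFilter_iff_of_measurableSet (hf hW.measurableSet)).2 hmem
  · have hWc : Wᶜ ∈ map f hU.1.toFilter := ⟨_, hmem, subset_rfl⟩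
    obtain ⟨y, hyW, hyWc⟩ := clusterPt_iff_nonempty.1 hz (hW.mem_nhds hzW) hWc
    exact absurd hyW hyWc

end IsMeasUltrafilter

/-- If `f : X → ℂ` is measurable and essentially bounded and `U` is a `μ`-ultrafilter,
then the limit of `f` along `U` exists: there is `z ∈ ℂ` such that for every `ε > 0`
the set `{x | |f x - z| < ε}` belongs to `U`. -/
theorem measUltrafilter_lim_exists (X : Type*) [MeasurableSpace X] (μ : Measure X)
    (f : X → ℂ) (hf : Measurable f) (hbd : ∃ C : ℝ, ∀ᵐ x ∂μ, ‖f x‖ ≤ C)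
    (U : Set (Set X)) (hU : IsMeasUltrafilter μ U) :
    ∃ z : ℂ, ∀ ε : ℝ, 0 < ε → {x : X | ‖f x - z‖ < ε} ∈ U := by
  obtain ⟨C, hC⟩ := hbd
  obtain ⟨z, -, hz⟩ := hU.exists_tendsto_nhds_of_ae_mem_isCompact hf
    (isCompact_closedBall 0 C) (hC.mono fun x hx => mem_closedBall_zero_iff.2 hx)
  refine ⟨z, fun ε hε => ?_⟩
  have hball : {x : X | ‖f x - z‖ < ε} = f ⁻¹' Metric.ball z ε := by
    ext x; simp [dist_eq_norm]
  rw [hball, ← hU.1.mem_toFilter_iff_of_measurableSet (hf Metric.isOpen_ball.measurableSet)]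
  exact hz (Metric.ball_mem_nhds z hε)
end

section
/- Let (X, Σ, λ) be a measure space, let f : X → ℂ be measurable and essentially bounded, and let z₀ ∈ ℂ. There exists a λ-ultrafilter U on X such that {x ∈ X : |f(x) − z₀| < ε} ∈ U for every ε > 0 if and only if λ({x ∈ X : |f(x) − z₀| < ε}) > 0 for every ε > 0. -/
/-!
A `μ`-ultrafilter has only sets of positive measure, which gives one direction. Conversely, if
every set `{x | ‖f x - z₀‖ < ε}` has positive measure, then so does every set of the ordinary
filter `comap f (𝓝 z₀)`; its measurable members form a `μ`-filter, and Zorn's lemma extends it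
to a `μ`-ultrafilter, along which `f` tends to `z₀`.
-/

open MeasureTheory

open Filter Topology

section MeasFilter

variable {X : Type*} [MeasurableSpace X] {μ : Measure X}

theorem IsMeasFilter.measure_pos_s7 {F : Set (Set X)} (hF : IsMeasFilter μ F) {A : Set X}
    (hA : A ∈ F) : 0 < μ A :=
  hF.2.2.1 A hA

theorem isMeasFilter_sUnion {c : Set (Set (Set X))} (hc : ∀ F ∈ c, IsMeasFilter μ F)
    (hchain : IsChain (· ⊆ ·) c) (hne : c.Nonempty) : IsMeasFilter μ (⋃₀ c) := by
  obtain ⟨F₀, hF₀⟩ := hne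
  refine ⟨?_, ?_, ?_, ?_, ?_⟩
  · obtain ⟨A, hA⟩ := (hc F₀ hF₀).1
    exact ⟨A, Set.mem_sUnion_of_mem hA hF₀⟩
  · rintro A ⟨F, hF, hAF⟩
    exact (hc F hF).2.1 A hAF
  · rintro A ⟨F, hF, hAF⟩
    exact (hc F hF).measure_pos_s7 hAF
  · rintro A ⟨F, hF, hAF⟩ B ⟨G, hG, hBG⟩
    rcases hchain.total hF hG with hFG | hGF
    · exact Set.mem_sUnion_of_mem ((hc G hG).2.2.2.1 A (hFG hAF) B hBG) hG
    · exact Set.mem_sUnion_of_mem ((hc F hF).2.2.2.1 A hAF B (hGF hBG)) hF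
  · rintro A ⟨F, hF, hAF⟩ B hB hAB
    exact Set.mem_sUnion_of_mem ((hc F hF).2.2.2.2 A hAF B hB hAB) hF

theorem IsMeasFilter.exists_isMeasUltrafilter_superset {F : Set (Set X)}
    (hF : IsMeasFilter μ F) : ∃ U, IsMeasUltrafilter μ U ∧ F ⊆ U := by
  obtain ⟨U, hFU, hUmax⟩ := zorn_subset_nonempty {G | IsMeasFilter μ G}
    (fun c hc hchain hne =>
      ⟨⋃₀ c, isMeasFilter_sUnion hc hchain hne, fun _ => Set.subset_sUnion_of_mem⟩) F hF
  exact ⟨U, ⟨hUmax.prop, fun G hG hUG => (hUmax.eq_of_subset hG hUG).symm⟩, hFU⟩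

theorem isMeasFilter_measurableSet_mem {l : Filter X} (hl : ∀ s ∈ l, 0 < μ s) :
    IsMeasFilter μ {s | MeasurableSet s ∧ s ∈ l} := by
  refine ⟨⟨Set.univ, MeasurableSet.univ, univ_mem⟩, fun _ hs => hs.1, fun s hs => hl s hs.2,
    fun s hs t ht => ⟨hs.1.inter ht.1, inter_mem hs.2 ht.2⟩, ?_⟩
  exact fun s hs t ht hst => ⟨ht, mem_of_superset hs.2 hst⟩

theorem exists_isMeasUltrafilter_measurableSet_mem {l : Filter X} (hl : ∀ s ∈ l, 0 < μ s) :
    ∃ U, IsMeasUltrafilter μ U ∧ ∀ s ∈ l, MeasurableSet s → s ∈ U := by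
  obtain ⟨U, hU, hlU⟩ := (isMeasFilter_measurableSet_mem hl).exists_isMeasUltrafilter_superset
  exact ⟨U, hU, fun s hs hsm => hlU ⟨hsm, hs⟩⟩

end MeasFilter

theorem measure_pos_of_mem_comap_nhds {X E : Type*} [MeasurableSpace X] [SeminormedAddCommGroup E]
    {μ : Measure X} {f : X → E} {z₀ : E}
    (hpos : ∀ ε : ℝ, 0 < ε → 0 < μ {x | ‖f x - z₀‖ < ε}) :
    ∀ s ∈ comap f (𝓝 z₀), 0 < μ s := by
  intro s hs
  obtain ⟨ε, hε, hball⟩ := (Metric.nhds_basis_ball.comap f).mem_iff.1 hs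
  calc 0 < μ {x | ‖f x - z₀‖ < ε} := hpos ε hε
    _ ≤ μ s := measure_mono fun x hx => hball (by simpa [dist_eq_norm] using hx)

theorem measUltrafilter_lim_iff_pos_general (X : Type*) [MeasurableSpace X] (μ : Measure X)
    (f : X → ℂ) (hf : Measurable f)
    (z₀ : ℂ) :
    (∃ U : Set (Set X), IsMeasUltrafilter μ U ∧
        ∀ ε : ℝ, 0 < ε → {x : X | ‖f x - z₀‖ < ε} ∈ U) ↔
      (∀ ε : ℝ, 0 < ε → 0 < μ {x : X | ‖f x - z₀‖ < ε}) := by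
  constructor
  · rintro ⟨U, hU, hlim⟩ ε hε
    exact hU.1.measure_pos_s7 (hlim ε hε)
  · intro hpos
    obtain ⟨U, hU, hlU⟩ :=
      exists_isMeasUltrafilter_measurableSet_mem (measure_pos_of_mem_comap_nhds hpos)
    refine ⟨U, hU, fun ε hε => hlU _ ?_ ?_⟩
    · exact mem_of_superset (preimage_mem_comap (Metric.ball_mem_nhds z₀ hε))
        fun x hx => by simpa [dist_eq_norm] using hx
    · exact measurableSet_lt (hf.sub_const z₀).norm measurable_const

/-- For a measurable essentially bounded `f : X → ℂ` and `z₀ ∈ ℂ`, there is a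
`μ`-ultrafilter `U` with `lim_U f = z₀` iff every `ε`-neighbourhood set
`{x | |f x - z₀| < ε}` has positive measure. -/
theorem measUltrafilter_lim_iff_pos (X : Type*) [MeasurableSpace X] (μ : Measure X)
    (f : X → ℂ) (hf : Measurable f) (hbd : ∃ C : ℝ, ∀ᵐ x ∂μ, ‖f x‖ ≤ C)
    (z₀ : ℂ) :
    (∃ U : Set (Set X), IsMeasUltrafilter μ U ∧
        ∀ ε : ℝ, 0 < ε → {x : X | ‖f x - z₀‖ < ε} ∈ U) ↔
      (∀ ε : ℝ, 0 < ε → 0 < μ {x : X | ‖f x - z₀‖ < ε}) :=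
  measUltrafilter_lim_iff_pos_general X μ f hf z₀
end

section
/- Let (X, Σ, λ) be a measure space with λ(X) > 0 and let f : X → ℂ be measurable and essentially bounded, with c denoting the essential supremum of |f|. If λ({x ∈ X : |f(x)| = c}) = 0, then there exist disjoint measurable sets A, B ⊆ X such that for every ε > 0 both λ({x ∈ A : c − |f(x)| < ε}) > 0 and λ({x ∈ B : c − |f(x)| < ε}) > 0. -/
/-!
Write `g = ‖f‖`. Since `c` is the least a.e. bound of `g` and `{g = c}` is null, every strip
`{t < g < c}` with `t < c` has positive measure. As such a strip is the countable union of the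
layers `{t < g ≤ s}`, `s ↑ c`, one of them has positive measure, so one can choose levels
`u₀ < u₁ < ⋯ → c` such that every layer `{uₙ < g ≤ uₙ₊₁}` has positive measure;
`A` and `B` are the unions of the even and of the odd layers.
-/

open MeasureTheory Set Filter Topology
open scoped Function

namespace MeasureTheory

variable {X : Type*} [MeasurableSpace X] {μ : Measure X} {g : X → ℝ} {c : ℝ}

theorem measure_preimage_Ioo_pos_of_isLeast (hc : IsLeast {c' | ∀ᵐ x ∂μ, g x ≤ c'} c)
    (hnull : μ (g ⁻¹' {c}) = 0) {t : ℝ} (ht : t < c) : 0 < μ (g ⁻¹' Ioo t c) := by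
  refine pos_iff_ne_zero.2 fun h ↦ ht.not_ge (hc.2 ?_)
  filter_upwards [hc.1, measure_eq_zero_iff_ae_notMem.1 h,
    measure_eq_zero_iff_ae_notMem.1 hnull] with x hle hIoo hne
  simp only [mem_preimage, mem_Ioo, mem_singleton_iff, not_and, not_lt] at hIoo hne
  by_contra! htx
  exact hne (le_antisymm hle (hIoo htx))

theorem exists_mem_Ioo_measure_preimage_Ioc_pos {t d : ℝ} (hpos : 0 < μ (g ⁻¹' Ioo t c))
    (hd : d < c) : ∃ s ∈ Ioo d c, 0 < μ (g ⁻¹' Ioc t s) := by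
  obtain ⟨w, -, hw_mem, hw_lim⟩ := exists_seq_strictMono_tendsto' hd
  by_contra! hnull
  have hcover : g ⁻¹' Ioo t c ⊆ ⋃ n, g ⁻¹' Ioc t (w n) := fun x hx ↦
    have ⟨n, hn⟩ := ((tendsto_order.1 hw_lim).1 _ hx.2).exists
    mem_iUnion.2 ⟨n, hx.1, hn.le⟩
  exact hpos.ne' <| measure_mono_null hcover <|
    measure_iUnion_null fun n ↦ nonpos_iff_eq_zero.1 (hnull _ (hw_mem n))

theorem exists_seq_strictMono_tendsto_measure_preimage_Ioc_pos
    (hpos : ∀ t < c, 0 < μ (g ⁻¹' Ioo t c)) :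
    ∃ u : ℕ → ℝ, StrictMono u ∧ Tendsto u atTop (𝓝 c) ∧
      ∀ n, 0 < μ (g ⁻¹' Ioc (u n) (u (n + 1))) := by
  obtain ⟨v, -, hv_mem, hv_lim⟩ := exists_seq_strictMono_tendsto' (sub_one_lt c)
  choose! next hnext_mem hnext_pos using fun n t (ht : t < c) ↦
    exists_mem_Ioo_measure_preimage_Ioc_pos (hpos t ht) (hv_mem n).2
  let u : ℕ → ℝ := fun n ↦ Nat.rec (motive := fun _ ↦ ℝ) (c - 1) next n
  have hu_lt : ∀ n, u n < c := fun n ↦ by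
    induction n with
    | zero => exact sub_one_lt c
    | succ n ih => exact (hnext_mem n _ ih).2
  have hu_pos n : 0 < μ (g ⁻¹' Ioc (u n) (u (n + 1))) := hnext_pos n _ (hu_lt n)
  -- an empty layer would be null
  have hu_mono : StrictMono u := strictMono_nat_of_lt_succ fun n ↦ by
    by_contra! h
    simpa [Ioc_eq_empty h.not_gt] using hu_pos n
  refine ⟨u, hu_mono, ?_, hu_pos⟩
  exact (tendsto_add_atTop_iff_nat 1).1 (tendsto_of_tendsto_of_tendsto_of_le_of_le hv_lim
    tendsto_const_nhds (fun n ↦ (hnext_mem n _ (hu_lt n)).1.le) fun n ↦ (hu_lt (n + 1)).le)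

theorem exists_disjoint_of_strictMono_tendsto_measure_preimage_Ioc_pos (hg : Measurable g)
    {u : ℕ → ℝ} (hu_mono : StrictMono u) (hu_lim : Tendsto u atTop (𝓝 c))
    (hu_pos : ∀ n, 0 < μ (g ⁻¹' Ioc (u n) (u (n + 1)))) :
    ∃ A B : Set X, MeasurableSet A ∧ MeasurableSet B ∧ Disjoint A B ∧
      ∀ ε : ℝ, 0 < ε → 0 < μ {x ∈ A | c - g x < ε} ∧ 0 < μ {x ∈ B | c - g x < ε} := by
  set I : ℕ → Set X := fun n ↦ g ⁻¹' Ioc (u n) (u (n + 1))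
  have hI_disj : Pairwise (Disjoint on I) := fun m n hmn ↦
    (hu_mono.monotone.pairwise_disjoint_on_Ioc_succ hmn).preimage g
  have hI_tail ε (hε : 0 < ε) : ∃ N, ∀ n ≥ N, I n ⊆ {x | c - g x < ε} := by
    obtain ⟨N, hN⟩ := ((tendsto_order.1 hu_lim).1 (c - ε) (by linarith)).exists_forall_of_atTop
    exact ⟨N, fun n hn x hx ↦ show c - g x < ε by linarith [hN n hn, hx.1]⟩
  have hpos_of_tail {S : Set X} {ε : ℝ} (hε : 0 < ε) (hS : ∀ N, ∃ n ≥ N, I n ⊆ S) :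
      0 < μ {x ∈ S | c - g x < ε} := by
    obtain ⟨N, hN⟩ := hI_tail ε hε
    obtain ⟨n, hn, hnS⟩ := hS N
    exact (hu_pos n).trans_le (measure_mono fun x hx ↦ ⟨hnS hx, hN n hn hx⟩)
  refine ⟨⋃ k, I (2 * k), ⋃ k, I (2 * k + 1),
    .iUnion fun k ↦ hg measurableSet_Ioc, .iUnion fun k ↦ hg measurableSet_Ioc, ?_,
    fun ε hε ↦ ⟨hpos_of_tail hε fun N ↦ ⟨2 * N, by omega, subset_iUnion_of_subset N subset_rfl⟩,
      hpos_of_tail hε fun N ↦ ⟨2 * N + 1, by omega, subset_iUnion_of_subset N subset_rfl⟩⟩⟩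
  exact disjoint_iUnion_left.2 fun i ↦ disjoint_iUnion_right.2 fun j ↦ hI_disj (by omega)

end MeasureTheory

theorem exists_disjoint_norming_sets_general (X : Type*) [MeasurableSpace X] (μ : Measure X)
    (f : X → ℂ) (hf : Measurable f) (c : ℝ)
    (hc₁ : ∀ᵐ x ∂μ, ‖f x‖ ≤ c)
    (hc₂ : ∀ c' : ℝ, (∀ᵐ x ∂μ, ‖f x‖ ≤ c') → c ≤ c')
    (hnull : μ {x : X | ‖f x‖ = c} = 0) :
    ∃ A B : Set X, MeasurableSet A ∧ MeasurableSet B ∧ Disjoint A B ∧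
      ∀ ε : ℝ, 0 < ε →
        0 < μ {x ∈ A | c - ‖f x‖ < ε} ∧
        0 < μ {x ∈ B | c - ‖f x‖ < ε} := by
  obtain ⟨u, hu_mono, hu_lim, hu_pos⟩ := exists_seq_strictMono_tendsto_measure_preimage_Ioc_pos
    fun _ ↦ measure_preimage_Ioo_pos_of_isLeast (g := (‖f ·‖)) ⟨hc₁, hc₂⟩ hnull
  exact exists_disjoint_of_strictMono_tendsto_measure_preimage_Ioc_pos hf.norm hu_mono hu_lim hu_pos

/-- **A splitting lemma.** Let `μ X > 0` and let `f : X → ℂ` be measurable with essential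
supremum of `|f|` equal to `c` (the least constant bounding `|f|` a.e.). If the set where
`|f| = c` is null, then there are disjoint measurable sets `A, B` such that for every `ε > 0`
both `{x ∈ A | c - |f x| < ε}` and `{x ∈ B | c - |f x| < ε}` have positive measure. -/
theorem exists_disjoint_norming_sets (X : Type*) [MeasurableSpace X] (μ : Measure X)
    (hX : 0 < μ Set.univ) (f : X → ℂ) (hf : Measurable f) (c : ℝ)
    (hc₁ : ∀ᵐ x ∂μ, ‖f x‖ ≤ c)
    (hc₂ : ∀ c' : ℝ, (∀ᵐ x ∂μ, ‖f x‖ ≤ c') → c ≤ c')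
    (hnull : μ {x : X | ‖f x‖ = c} = 0) :
    ∃ A B : Set X, MeasurableSet A ∧ MeasurableSet B ∧ Disjoint A B ∧
      ∀ ε : ℝ, 0 < ε →
        0 < μ {x ∈ A | c - ‖f x‖ < ε} ∧
        0 < μ {x ∈ B | c - ‖f x‖ < ε} :=
  exists_disjoint_norming_sets_general X μ f hf c hc₁ hc₂ hnull
end

section
/- Let (X, Σ, λ) be a measure space and let f ∈ L_∞(X, λ) with f ≠ 0. Then f is a smooth point of L_∞(X, λ) if and only if there exists a λ-atom A such that |f(x)| = ‖f‖_∞ for λ-almost every x ∈ A and, for some ε > 0, λ({x ∈ X \ A : |f(x)| > ‖f‖_∞ − ε}) = 0. -/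
open MeasureTheory

def IsMeasAtom {X : Type*} [MeasurableSpace X] (μ : Measure X) (A : Set X) : Prop :=
  MeasurableSet A ∧ 0 < μ A ∧
    ∀ B : Set X, B ⊆ A → MeasurableSet B → μ B = 0 ∨ μ (A \ B) = 0

/-!
If `|f|` comes arbitrarily close to `‖f‖_∞` on a non-null part of a set `B`, restricting to
`L_∞(B)` and extending a norming functional of `f|_B` by Hahn–Banach gives a norming functional of
`f` that kills every function vanishing on `B`. So when `f` is smooth, no measurable `B` lets
`|f|` approach `‖f‖_∞` both on `B` and on `Bᶜ`: otherwise the two functionals coincide and kill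
both `f 1_B` and `f 1_{Bᶜ}`. For the top level set `A = {|f| = ‖f‖_∞}` this forces `A` to be an
atom with `|f| ≤ ‖f‖_∞ - ε` off `A`; if `A` were null, distributing the level sets of
`⌊1 / (‖f‖_∞ - |f|)⌋` alternately between `B` and `Bᶜ` would produce such a splitting.

Conversely, every function is a.e. constant on an atom `A`, so every `g` is a multiple of `f`
plus a function vanishing on `A`. A norming functional kills the latter kind of function `h`,
because `‖f + a h‖_∞ ≤ ‖f‖_∞` for all small `a` when `|f| ≤ ‖f‖_∞ - ε` off `A`.
-/

open Filter Set Function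

section NormingFunctional

variable {𝕜 E F : Type*} [RCLike 𝕜] [NormedAddCommGroup E] [NormedSpace 𝕜 E]
  [NormedAddCommGroup F] [NormedSpace 𝕜 F]

def IsNormingFunctional (ψ : E →L[𝕜] 𝕜) (x : E) : Prop :=
  ‖ψ‖ = 1 ∧ ψ x = ‖x‖

lemma exists_isNormingFunctional_of_norm_map_eq {T : E →L[𝕜] F} (hT : ‖T‖ ≤ 1) {x : E}
    (hx : x ≠ 0) (hTx : ‖T x‖ = ‖x‖) :
    ∃ ψ : E →L[𝕜] 𝕜, IsNormingFunctional ψ x ∧ ∀ y, T y = 0 → ψ y = 0 := by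
  obtain ⟨χ, hχ, hχx⟩ := exists_dual_vector 𝕜 (T x) (by rw [hTx]; exact norm_ne_zero_iff.2 hx)
  have hψx : (χ ∘L T) x = ‖x‖ := by rw [ContinuousLinearMap.comp_apply, hχx, hTx]
  refine ⟨χ ∘L T, ⟨le_antisymm ?_ ?_, hψx⟩, fun y hy => by simp [hy]⟩
  · calc ‖χ ∘L T‖ ≤ ‖χ‖ * ‖T‖ := χ.opNorm_comp_le T
      _ ≤ 1 := by rw [hχ, one_mul]; exact hT
  · have := (χ ∘L T).le_opNorm x
    rw [hψx, RCLike.norm_ofReal, abs_norm] at this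
    exact le_of_mul_le_mul_right (by rwa [one_mul]) (norm_pos_iff.2 hx)

lemma IsNormingFunctional.apply_eq_zero {ψ : E →L[𝕜] 𝕜} {x y : E}
    (hψ : IsNormingFunctional ψ x) {r : ℝ} (hr : 0 < r)
    (h : ∀ a : 𝕜, ‖a‖ ≤ r → ‖x + a • y‖ ≤ ‖x‖) : ψ y = 0 := by
  by_contra hy
  have hψy : 0 < ‖ψ y‖ := norm_pos_iff.2 hy
  set a : 𝕜 := ((r / ‖ψ y‖ : ℝ) : 𝕜) * starRingEnd 𝕜 (ψ y)
  have ha : ‖a‖ = r := by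
    rw [norm_mul, RCLike.norm_conj, RCLike.norm_ofReal, abs_of_pos (by positivity),
      div_mul_cancel₀ _ hψy.ne']
  have hay : a * ψ y = ((r * ‖ψ y‖ : ℝ) : 𝕜) := by
    rw [mul_assoc, RCLike.conj_mul]
    push_cast
    field_simp
  have : ‖x‖ + r * ‖ψ y‖ ≤ ‖x‖ := calc
    ‖x‖ + r * ‖ψ y‖ = ‖ψ (x + a • y)‖ := by
      rw [map_add, map_smul, smul_eq_mul, hψ.2, hay, ← RCLike.ofReal_add, RCLike.norm_ofReal,
        abs_of_pos (by positivity)]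
    _ ≤ ‖ψ‖ * ‖x + a • y‖ := ψ.le_opNorm _
    _ ≤ ‖x‖ := by rw [hψ.1, one_mul]; exact h a ha.le
  linarith [mul_pos hr hψy]

end NormingFunctional

section ApproachesOn

variable {X : Type*} [MeasurableSpace X] {μ : Measure X}

lemma exists_measurableSet_frequently_pos_and_compl {L : ℕ → Set X}
    (hLm : ∀ n, MeasurableSet (L n)) (hL : Pairwise (Disjoint on L))
    (hpos : {n | 0 < μ (L n)}.Infinite) :
    ∃ B, MeasurableSet B ∧ ∀ N, (∃ n ≥ N, L n ⊆ B ∧ 0 < μ (L n)) ∧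
      (∃ n ≥ N, L n ⊆ Bᶜ ∧ 0 < μ (L n)) := by
  set e := Nat.nth fun n => 0 < μ (L n)
  have he : StrictMono e := Nat.nth_strictMono hpos
  refine ⟨⋃ j, L (e (2 * j)), .iUnion fun j => hLm _, fun N => ⟨?_, ?_⟩⟩
  · exact ⟨e (2 * N), by have := (he.le_apply : 2 * N ≤ e (2 * N)); omega,
      subset_iUnion_of_subset N subset_rfl, Nat.nth_mem_of_infinite hpos _⟩
  · refine ⟨e (2 * N + 1), by have := (he.le_apply : 2 * N + 1 ≤ _); omega, ?_,
      Nat.nth_mem_of_infinite hpos _⟩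
    rw [subset_compl_iff_disjoint_right, disjoint_iUnion_right]
    exact fun j => hL fun h => by have := he.injective h; omega

variable {u v : X → ℝ} {M : ℝ} {B : Set X}

/-- `M ≤ ess sup u` on `B`. -/
def ApproachesOn (μ : Measure X) (u : X → ℝ) (M : ℝ) (B : Set X) : Prop :=
  ∀ δ, 0 < δ → 0 < μ.restrict B {x | M - δ < u x}

lemma ApproachesOn.congr_ae (h : ApproachesOn μ u M B) (huv : u =ᵐ[μ] v) :
    ApproachesOn μ v M B := by
  intro δ hδ
  have : {x | M - δ < u x} =ᵐ[μ.restrict B] {x | M - δ < v x} :=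
    (ae_restrict_of_ae huv).mono fun x hx => show (M - δ < u x) = (M - δ < v x) by rw [hx]
  exact measure_congr this ▸ h δ hδ

lemma approachesOn_of_measure_pos (h : 0 < μ (B ∩ {x | M ≤ u x})) : ApproachesOn μ u M B := by
  intro δ hδ
  have hsub : B ∩ {x | M ≤ u x} ⊆ {x | M - δ < u x} ∩ B := fun x ⟨hxB, hx⟩ =>
    ⟨show M - δ < u x by have : M ≤ u x := hx; linarith, hxB⟩
  exact h.trans_le ((measure_mono hsub).trans (Measure.le_restrict_apply _ _))

-- A product rather than `M - 1 / n ≤ u x`, so that `n = 0` needs no exception (`1 / 0 = 0`).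
lemma approachesOn_of_frequently_pos {L : ℕ → Set X}
    (hL : ∀ n : ℕ, ∀ x ∈ L n, n * (M - u x) ≤ 1)
    (hB : ∀ N, ∃ n ≥ N, L n ⊆ B ∧ 0 < μ (L n)) : ApproachesOn μ u M B := by
  intro δ hδ
  obtain ⟨N, hN⟩ := exists_nat_gt δ⁻¹
  obtain ⟨n, hnN, hnB, hn⟩ := hB N
  have hnδ : 1 < n * δ := by
    have : δ⁻¹ < n := hN.trans_le (by exact_mod_cast hnN)
    rwa [inv_lt_iff_one_lt_mul₀ hδ] at this
  have hsub : L n ⊆ {x | M - δ < u x} ∩ B := fun x hx =>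
    ⟨show M - δ < u x by nlinarith [hL n x hx], hnB hx⟩
  exact hn.trans_le ((measure_mono hsub).trans (Measure.le_restrict_apply _ _))

lemma exists_approachesOn_and_compl (hu : Measurable u) (h : ApproachesOn μ u M univ)
    (htop : μ {x | M ≤ u x} = 0) :
    ∃ B, MeasurableSet B ∧ ApproachesOn μ u M B ∧ ApproachesOn μ u M Bᶜ := by
  set L : ℕ → Set X := fun n => {x | u x < M ∧ ⌊(M - u x)⁻¹⌋₊ = n}
  have hLm : ∀ n, MeasurableSet (L n) := fun n =>
    (measurableSet_lt hu measurable_const).inter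
      (measurableSet_eq_fun (measurable_const.sub hu).inv.nat_floor measurable_const)
  have hL : Pairwise (Disjoint on L) := fun m n hmn =>
    disjoint_left.2 fun x hm hn => hmn (hm.2.symm.trans hn.2)
  have hLu : ∀ n : ℕ, ∀ x ∈ L n, n * (M - u x) ≤ 1 := by
    rintro n x ⟨hx, rfl⟩
    have hpos : 0 < M - u x := sub_pos.2 hx
    calc _ ≤ (M - u x)⁻¹ * (M - u x) := by gcongr; exact Nat.floor_le (by positivity)
      _ = 1 := inv_mul_cancel₀ hpos.ne'
  have hinf : {n | 0 < μ (L n)}.Infinite := by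
    intro hfin
    obtain ⟨N, hN⟩ := hfin.bddAbove
    have hcover : {x | M - ((N : ℝ) + 1)⁻¹ < u x} ⊆ {x | M ≤ u x} ∪ ⋃ n > N, L n := by
      intro x (hx : M - ((N : ℝ) + 1)⁻¹ < u x)
      rcases le_or_gt M (u x) with hxM | hxM
      · exact Or.inl hxM
      refine Or.inr (mem_iUnion₂.2 ⟨_, ?_, hxM, rfl⟩)
      have hpos : 0 < M - u x := sub_pos.2 hxM
      have : ((N + 1 : ℕ) : ℝ) ≤ (M - u x)⁻¹ := by
        push_cast
        exact ((lt_inv_comm₀ hpos (by positivity)).1 (by linarith)).le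
      exact Nat.le_floor this
    have hnull : μ (⋃ n > N, L n) = 0 :=
      measure_iUnion_null fun n => measure_iUnion_null fun hn =>
        nonpos_iff_eq_zero.1 <| not_lt.1 fun hpos => (hN hpos).not_gt hn
    have := h ((N : ℝ) + 1)⁻¹ (by positivity)
    rw [Measure.restrict_univ] at this
    exact this.ne' (measure_mono_null hcover (measure_union_null htop hnull))
  obtain ⟨B, hBm, hB⟩ := exists_measurableSet_frequently_pos_and_compl hLm hL hinf
  exact ⟨B, hBm, approachesOn_of_frequently_pos hLu fun N => (hB N).1,
    approachesOn_of_frequently_pos hLu fun N => (hB N).2⟩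

lemma isMeasAtom_of_not_approachesOn_compl (hu : Measurable u) (h : ApproachesOn μ u M univ)
    (hsplit : ∀ B, MeasurableSet B → ApproachesOn μ u M B → ¬ApproachesOn μ u M Bᶜ) :
    IsMeasAtom μ {x | M ≤ u x} ∧
      ∃ ε, 0 < ε ∧ μ ({x | M ≤ u x}ᶜ ∩ {x | M - ε < u x}) = 0 := by
  set A := {x | M ≤ u x}
  have hAm : MeasurableSet A := measurableSet_le measurable_const hu
  have hA : 0 < μ A := pos_iff_ne_zero.2 fun hA => by
    obtain ⟨B, hBm, hB, hBc⟩ := exists_approachesOn_and_compl hu h hA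
    exact hsplit B hBm hB hBc
  have hatom : ∀ B ⊆ A, MeasurableSet B → μ B = 0 ∨ μ (A \ B) = 0 := by
    intro B hBA hBm
    by_contra! hne
    refine hsplit B hBm (approachesOn_of_measure_pos ?_) (approachesOn_of_measure_pos ?_)
    · rw [inter_eq_left.2 hBA]
      exact pos_iff_ne_zero.2 hne.1
    · rw [inter_comm, ← sdiff_eq]
      exact pos_iff_ne_zero.2 hne.2
  refine ⟨⟨hAm, hA, hatom⟩, ?_⟩
  by_contra! hε
  refine hsplit A hAm (approachesOn_of_measure_pos (by rwa [inter_self])) fun δ hδ => ?_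
  rw [Measure.restrict_apply' hAm.compl, inter_comm]
  exact pos_iff_ne_zero.2 (hε δ hδ)

end ApproachesOn

namespace IsMeasAtom

variable {X : Type*} [MeasurableSpace X] {μ : Measure X} {A : Set X}

lemma ae_mem_or_ae_notMem (hA : IsMeasAtom μ A) {D : Set X} (hD : MeasurableSet D) :
    (∀ᵐ x ∂μ.restrict A, x ∈ D) ∨ ∀ᵐ x ∂μ.restrict A, x ∉ D := by
  rw [ae_restrict_iff' hA.1, ae_restrict_iff' hA.1]
  rcases hA.2.2 (A \ D) sdiff_subset (hA.1.diff hD) with h | h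
  · exact .inl <| (measure_eq_zero_iff_ae_notMem.1 h).mono fun x hx hxA =>
      not_not.1 fun hxD => hx ⟨hxA, hxD⟩
  · exact .inr <| (measure_eq_zero_iff_ae_notMem.1 h).mono fun x hx hxA hxD =>
      hx ⟨hxA, fun h => h.2 hxD⟩

lemma exists_ae_eq_const {β : Type*} [MeasurableSpace β] [Nonempty β]
    [HasCountableSeparatingOn β MeasurableSet univ] (hA : IsMeasAtom μ A) {g : X → β}
    (hg : AEMeasurable g μ) : ∃ c, g =ᵐ[μ.restrict A] fun _ => c := by
  obtain ⟨c, hc⟩ := exists_eventuallyEq_const_of_forall_separating (f := hg.mk g)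
    (l := ae (μ.restrict A)) (MeasurableSet : Set β → Prop)
    fun U hU => hA.ae_mem_or_ae_notMem (hg.measurable_mk hU)
  exact ⟨c, Filter.EventuallyEq.trans (ae_restrict_of_ae hg.ae_eq_mk) hc⟩

lemma exists_sub_smul_ae_eq_zero {𝕜 : Type*} [RCLike 𝕜] [MeasurableSpace 𝕜] [BorelSpace 𝕜]
    (hA : IsMeasAtom μ A) {f g : X → 𝕜} (hf : AEMeasurable f μ) (hg : AEMeasurable g μ)
    (hfA : ¬f =ᵐ[μ.restrict A] 0) : ∃ t : 𝕜, g - t • f =ᵐ[μ.restrict A] 0 := by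
  obtain ⟨a, ha⟩ := hA.exists_ae_eq_const hf
  obtain ⟨b, hb⟩ := hA.exists_ae_eq_const hg
  have ha0 : a ≠ 0 := by
    rintro rfl
    exact hfA ha
  refine ⟨b / a, ?_⟩
  filter_upwards [ha, hb] with x hax hbx
  simp [hax, hbx, ha0]

end IsMeasAtom

namespace MeasureTheory.Lp

variable {X 𝕜 E : Type*} [MeasurableSpace X] {μ : Measure X} [NormedAddCommGroup E]

lemma ae_norm_le_norm_top (f : Lp E ⊤ μ) : ∀ᵐ x ∂μ, ‖f x‖ ≤ ‖f‖ := by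
  filter_upwards [ae_le_eLpNormEssSup (f := f)] with x hx
  rw [Lp.norm_def, eLpNorm_exponent_top, ← ofReal_norm] at *
  exact (ENNReal.ofReal_le_iff_le_toReal (by simpa using Lp.eLpNorm_ne_top f)).1 hx

lemma norm_top_le_of_ae_norm_le (f : Lp E ⊤ μ) {C : ℝ} (hC : 0 ≤ C)
    (h : ∀ᵐ x ∂μ, ‖f x‖ ≤ C) : ‖f‖ ≤ C := by
  rw [Lp.norm_def, eLpNorm_exponent_top]
  exact ENNReal.toReal_le_of_le_ofReal hC (eLpNormEssSup_le_of_ae_bound h)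

lemma approachesOn_norm_univ (f : Lp E ⊤ μ) (hf : f ≠ 0) : ApproachesOn μ (‖f ·‖) ‖f‖ Set.univ := by
  intro δ hδ
  rw [Measure.restrict_univ, pos_iff_ne_zero]
  intro hnull
  have hle : ∀ᵐ x ∂μ, ‖f x‖ ≤ max (‖f‖ - δ) 0 :=
    (measure_eq_zero_iff_ae_notMem.1 hnull).mono fun x hx => le_max_of_le_left (not_lt.1 hx)
  have hle' := norm_top_le_of_ae_norm_le f (le_max_right _ _) hle
  have hpos := norm_pos_iff.2 hf
  rcases max_cases (‖f‖ - δ) 0 with ⟨h, -⟩ | ⟨h, -⟩ <;> linarith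

variable [RCLike 𝕜] [NormedSpace 𝕜 E] {f : Lp E ⊤ μ} {B : Set X}

lemma norm_LpToLpRestrictCLM_le : ‖LpToLpRestrictCLM X E 𝕜 μ ⊤ B‖ ≤ 1 :=
  ContinuousLinearMap.opNorm_le_bound _ zero_le_one fun f => by
    rw [one_mul]
    exact norm_Lp_toLp_restrict_le B f

lemma norm_LpToLpRestrictCLM_apply_of_approachesOn (hB : ApproachesOn μ (‖f ·‖) ‖f‖ B) :
    ‖LpToLpRestrictCLM X E 𝕜 μ ⊤ B f‖ = ‖f‖ := by
  set g := LpToLpRestrictCLM X E 𝕜 μ ⊤ B f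
  refine le_antisymm (norm_Lp_toLp_restrict_le B f) (not_lt.1 fun hlt => ?_)
  have hle : ∀ᵐ x ∂μ.restrict B, ‖f x‖ ≤ ‖g‖ := by
    filter_upwards [ae_norm_le_norm_top g, LpToLpRestrictCLM_coeFn 𝕜 B f] with x hx hgx
    rwa [← hgx]
  refine (hB (‖f‖ - ‖g‖) (sub_pos.2 hlt)).ne' (measure_eq_zero_iff_ae_notMem.2 ?_)
  filter_upwards [hle] with x hx
  simp only [not_lt]
  linarith

lemma exists_isNormingFunctional_vanishing_of_approachesOn (hf : f ≠ 0)
    (hB : ApproachesOn μ (‖f ·‖) ‖f‖ B) :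
    ∃ ψ : Lp E ⊤ μ →L[𝕜] 𝕜, IsNormingFunctional ψ f ∧
      ∀ g : Lp E ⊤ μ, g =ᵐ[μ.restrict B] 0 → ψ g = 0 := by
  obtain ⟨ψ, hψ, hker⟩ := exists_isNormingFunctional_of_norm_map_eq
    (norm_LpToLpRestrictCLM_le (𝕜 := 𝕜)) hf (norm_LpToLpRestrictCLM_apply_of_approachesOn hB)
  refine ⟨ψ, hψ, fun g hg => hker g (Lp.ext ?_)⟩
  exact (LpToLpRestrictCLM_coeFn 𝕜 B g).trans (hg.trans (Lp.coeFn_zero E ⊤ _).symm)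

lemma not_approachesOn_compl_of_existsUnique (hf : f ≠ 0)
    (huniq : ∃! ψ : Lp E ⊤ μ →L[𝕜] 𝕜, IsNormingFunctional ψ f) (hBm : MeasurableSet B)
    (hB : ApproachesOn μ (‖f ·‖) ‖f‖ B) : ¬ApproachesOn μ (‖f ·‖) ‖f‖ Bᶜ := by
  intro hBc
  obtain ⟨ψ, hψ, hψB⟩ := exists_isNormingFunctional_vanishing_of_approachesOn (𝕜 := 𝕜) hf hB
  obtain ⟨ψ', hψ', hψ'Bc⟩ := exists_isNormingFunctional_vanishing_of_approachesOn (𝕜 := 𝕜) hf hBc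
  obtain rfl := huniq.unique hψ hψ'
  have hg_mem := (Lp.memLp f).indicator hBm
  set g := hg_mem.toLp (B.indicator f)
  have hg : ψ g = 0 := hψ'Bc g <| Filter.EventuallyEq.trans
    (ae_restrict_of_ae hg_mem.coeFn_toLp) (indicator_ae_eq_restrict_compl hBm)
  have hfg : ψ (f - g) = 0 := hψB _ <| by
    filter_upwards [ae_restrict_of_ae (Lp.coeFn_sub f g), ae_restrict_of_ae hg_mem.coeFn_toLp,
      indicator_ae_eq_restrict (f := (f : X → E)) hBm] with x h₁ h₂ h₃
    rw [h₁, Pi.sub_apply, h₂, h₃, sub_self, Pi.zero_apply]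
  rw [map_sub, hg, sub_zero, hψ.2, RCLike.ofReal_eq_zero] at hfg
  exact hf (norm_eq_zero.1 hfg)


lemma exists_isMeasAtom_of_existsUnique_isNormingFunctional (hf : f ≠ 0)
    (huniq : ∃! ψ : Lp E ⊤ μ →L[𝕜] 𝕜, IsNormingFunctional ψ f) :
    ∃ A : Set X, IsMeasAtom μ A ∧ (∀ᵐ x ∂μ.restrict A, ‖f x‖ = ‖f‖) ∧
      ∃ ε : ℝ, 0 < ε ∧ μ {x ∈ Aᶜ | ‖f‖ - ε < ‖f x‖} = 0 := by
  have hfm := Lp.aestronglyMeasurable f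
  have hu : Measurable (‖hfm.mk f ·‖) := hfm.stronglyMeasurable_mk.norm.measurable
  have hfu : (‖f ·‖) =ᵐ[μ] (‖hfm.mk f ·‖) := hfm.ae_eq_mk.fun_comp norm
  obtain ⟨hA, ε, hε, hnull⟩ := isMeasAtom_of_not_approachesOn_compl hu
    ((approachesOn_norm_univ f hf).congr_ae hfu) fun B hBm hB hBc =>
      not_approachesOn_compl_of_existsUnique hf huniq hBm (hB.congr_ae hfu.symm)
        (hBc.congr_ae hfu.symm)
  refine ⟨_, hA, ?_, ε, hε, ?_⟩
  · filter_upwards [ae_restrict_of_ae (ae_norm_le_norm_top f), ae_restrict_of_ae hfu,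
      ae_restrict_mem hA.1] with x hle hx hxA
    exact hle.antisymm (hx ▸ hxA)
  · refine (measure_congr ?_).trans hnull
    filter_upwards [hfu] with x hx
    change (_ ∧ _) = (_ ∧ _)
    rw [hx]
    rfl

lemma norm_add_smul_le_of_ae_eq_zero {A : Set X} (hA : MeasurableSet A) {ε : ℝ}
    (hoff : μ {x ∈ Aᶜ | ‖f‖ - ε < ‖f x‖} = 0) {h : Lp E ⊤ μ} (hh : h =ᵐ[μ.restrict A] 0)
    {a : 𝕜} (ha : ‖a‖ * ‖h‖ ≤ ε) : ‖f + a • h‖ ≤ ‖f‖ := by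
  refine norm_top_le_of_ae_norm_le _ (norm_nonneg f) ?_
  filter_upwards [Lp.coeFn_add f (a • h), Lp.coeFn_smul a h, (ae_restrict_iff' hA).1 hh,
    measure_eq_zero_iff_ae_notMem.1 hoff, ae_norm_le_norm_top f, ae_norm_le_norm_top h]
    with x hadd hsmul hhx hoffx hfx hhx'
  rw [hadd, Pi.add_apply, hsmul, Pi.smul_apply]
  by_cases hxA : x ∈ A
  · rwa [hhx hxA, Pi.zero_apply, smul_zero, add_zero]
  have hfx' : ‖f x‖ ≤ ‖f‖ - ε := not_lt.1 fun hlt => hoffx ⟨hxA, hlt⟩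
  calc ‖f x + a • h x‖ ≤ ‖f x‖ + ‖a‖ * ‖h x‖ := (norm_add_le _ _).trans_eq (by rw [norm_smul])
    _ ≤ (‖f‖ - ε) + ‖a‖ * ‖h‖ := by gcongr
    _ ≤ ‖f‖ := by linarith

lemma _root_.IsNormingFunctional.apply_eq_zero_of_ae_eq_zero {ψ : Lp E ⊤ μ →L[𝕜] 𝕜}
    (hψ : IsNormingFunctional ψ f) {A : Set X} (hA : MeasurableSet A) {ε : ℝ} (hε : 0 < ε)
    (hoff : μ {x ∈ Aᶜ | ‖f‖ - ε < ‖f x‖} = 0) {h : Lp E ⊤ μ} (hh : h =ᵐ[μ.restrict A] 0) :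
    ψ h = 0 := by
  refine hψ.apply_eq_zero (r := ε / (‖h‖ + 1)) (by positivity) fun a ha =>
    norm_add_smul_le_of_ae_eq_zero hA hoff hh ?_
  calc ‖a‖ * ‖h‖ ≤ ε / (‖h‖ + 1) * (‖h‖ + 1) := by gcongr; linarith
    _ = ε := div_mul_cancel₀ _ (by positivity)

lemma existsUnique_isNormingFunctional_of_isMeasAtom [MeasurableSpace 𝕜] [BorelSpace 𝕜]
    {f : Lp 𝕜 ⊤ μ} (hf : f ≠ 0) {A : Set X} (hA : IsMeasAtom μ A)
    (hfA : ∀ᵐ x ∂μ.restrict A, ‖f x‖ = ‖f‖) {ε : ℝ} (hε : 0 < ε)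
    (hoff : μ {x ∈ Aᶜ | ‖f‖ - ε < ‖f x‖} = 0) :
    ∃! ψ : Lp 𝕜 ⊤ μ →L[𝕜] 𝕜, IsNormingFunctional ψ f := by
  obtain ⟨ψ₀, hψ₀⟩ := exists_dual_vector 𝕜 f (norm_ne_zero_iff.2 hf)
  have hf0 : ¬(f : X → 𝕜) =ᵐ[μ.restrict A] 0 := fun h0 => by
    have := ae_restrict_neBot.2 hA.2.1.ne'
    obtain ⟨x, hx, hx0⟩ := (hfA.and h0).exists
    exact hf (norm_eq_zero.1 (by simpa [hx0] using hx.symm))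
  refine ⟨ψ₀, hψ₀, fun ψ hψ => ContinuousLinearMap.ext fun g => ?_⟩
  obtain ⟨t, ht⟩ := hA.exists_sub_smul_ae_eq_zero (Lp.aestronglyMeasurable f).aemeasurable
    (Lp.aestronglyMeasurable g).aemeasurable hf0
  have hvan : (g - t • f : Lp 𝕜 ⊤ μ) =ᵐ[μ.restrict A] 0 := by
    filter_upwards [ae_restrict_of_ae (Lp.coeFn_sub g (t • f)),
      ae_restrict_of_ae (Lp.coeFn_smul t f), ht] with x h₁ h₂ h₃
    rwa [h₁, Pi.sub_apply, h₂]
  have hφ : ∀ φ, IsNormingFunctional φ f → φ g = t * ‖f‖ := fun φ hφ => by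
    have := hφ.apply_eq_zero_of_ae_eq_zero hA.1 hε hoff hvan
    rwa [map_sub, map_smul, hφ.2, smul_eq_mul, sub_eq_zero] at this
  rw [hφ ψ hψ, hφ ψ₀ hψ₀]

end MeasureTheory.Lp

/-- **Smooth points of `L_∞`.** A nonzero `f ∈ L_∞(X, μ)` is smooth iff there is a
`μ`-atom `A` with `|f| = ‖f‖_∞` a.e. on `A` and, for some `ε > 0`, the set
`{x ∈ X \ A : |f x| > ‖f‖_∞ - ε}` is null. -/
theorem smooth_points_Linfty (X : Type*) [MeasurableSpace X] (μ : Measure X)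
    (f : Lp ℂ ⊤ μ) (hf : f ≠ 0) :
    (∃! ψ : Lp ℂ ⊤ μ →L[ℂ] ℂ, ‖ψ‖ = 1 ∧ ψ f = (‖f‖ : ℂ)) ↔
      ∃ A : Set X, IsMeasAtom μ A ∧
        (∀ᵐ x ∂μ.restrict A, ‖f x‖ = ‖f‖) ∧
        ∃ ε : ℝ, 0 < ε ∧ μ {x ∈ Aᶜ | ‖f‖ - ε < ‖f x‖} = 0 := by
  refine ⟨Lp.exists_isMeasAtom_of_existsUnique_isNormingFunctional hf, ?_⟩
  rintro ⟨A, hA, hfA, ε, hε, hoff⟩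
  exact Lp.existsUnique_isNormingFunctional_of_isMeasAtom hf hA hfA hε hoff
end

section
/- Let (X, Σ, λ) be a measure space, let f : X → ℂ be integrable and not λ-almost everywhere zero, and let h : X → ℂ be measurable. Then |h(x)| ≤ 1 for λ-almost every x and ∫_X h·f dλ = ‖f‖₁ hold if and only if h(x) = conj(sgn(f(x))) for λ-almost every x with f(x) ≠ 0 and |h(x)| ≤ 1 for λ-almost every x with f(x) = 0. -/
/-!
If `‖h‖ ≤ 1` a.e. then `re (h f) ≤ ‖h f‖ ≤ ‖f‖` pointwise, so `∫ h f = ‖f‖₁` forces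
`re (h f) = ‖f‖` a.e., and then `h f = ‖f‖` a.e. because a complex number whose real part
dominates its modulus is that nonnegative real. Where `f ≠ 0` the equation `h f = ‖f‖` says
exactly `h = conj (sgn f)`, and where `f = 0` it is empty.
-/

open MeasureTheory

/-- The sign function on `ℂ`: `sgn z = z / |z|` for `z ≠ 0` and `sgn 0 = 0`. -/
noncomputable def csgn (z : ℂ) : ℂ := if z = 0 then 0 else z / (‖z‖ : ℂ)

open Filter ComplexConjugate

theorem integral_mul_eq_integral_norm_iff {X 𝕜 : Type*} [RCLike 𝕜] [MeasurableSpace X]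
    {μ : Measure X} {f h : X → 𝕜} (hf : Integrable f μ) (hh : AEStronglyMeasurable h μ)
    (hh_le : ∀ᵐ x ∂μ, ‖h x‖ ≤ 1) :
    ∫ x, h x * f x ∂μ = ((∫ x, ‖f x‖ ∂μ : ℝ) : 𝕜) ↔
      (fun x => h x * f x) =ᵐ[μ] fun x => (‖f x‖ : 𝕜) := by
  have hnorm : ∀ᵐ x ∂μ, ‖h x * f x‖ ≤ ‖f x‖ := by
    filter_upwards [hh_le] with x hx
    rw [norm_mul]
    exact mul_le_of_le_one_left (norm_nonneg _) hx
  have hhf : Integrable (fun x => h x * f x) μ := hf.bdd_mul hh hh_le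
  refine ⟨fun hint => ?_, fun heq => by rw [integral_congr_ae heq, integral_ofReal]⟩
  have hre : (fun x => RCLike.re (h x * f x)) =ᵐ[μ] fun x => ‖f x‖ := by
    refine (integral_eq_iff_of_ae_le hhf.re hf.norm ?_).1 ?_
    · filter_upwards [hnorm] with x hx using (RCLike.re_le_norm _).trans hx
    · rw [integral_re hhf, hint, RCLike.ofReal_re]
  filter_upwards [hre, hnorm] with x hre hx
  rw [← hre]
  exact (RCLike.re_eq_self_of_le (hre ▸ hx)).symm

theorem mul_eq_norm_iff_eq_conj_csgn {z w : ℂ} (hz : z ≠ 0) :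
    w * z = ‖z‖ ↔ w = conj (csgn z) := by
  have hnorm : (‖z‖ : ℂ) ≠ 0 := by simpa using hz
  have hinv : (‖z‖ : ℂ) / z = conj z / ‖z‖ := by
    rw [div_eq_div_iff hz hnorm, mul_comm (conj z), Complex.mul_conj, Complex.normSq_eq_norm_sq]
    push_cast
    ring
  rw [csgn, if_neg hz, map_div₀, Complex.conj_ofReal, ← hinv, eq_div_iff hz]

theorem norm_conj_csgn {z : ℂ} (hz : z ≠ 0) : ‖conj (csgn z)‖ = 1 := by
  simp [csgn, hz]

theorem norm_le_one_and_mul_eq_norm_iff (z w : ℂ) :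
    (‖w‖ ≤ 1 ∧ w * z = ‖z‖) ↔ (z ≠ 0 → w = conj (csgn z)) ∧ (z = 0 → ‖w‖ ≤ 1) := by
  rcases eq_or_ne z 0 with rfl | hz
  · simp
  · simp only [hz, ne_eq, not_false_eq_true, forall_const, IsEmpty.forall_iff, and_true,
      mul_eq_norm_iff_eq_conj_csgn hz]
    exact ⟨And.right, fun hw => ⟨hw ▸ (norm_conj_csgn hz).le, hw⟩⟩

theorem norming_functional_L1_general (X : Type*) [MeasurableSpace X] (μ : Measure X)
    (f : X → ℂ) (hf : Integrable f μ)
    (h : X → ℂ) (hh : Measurable h) :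
    ((∀ᵐ x ∂μ, ‖h x‖ ≤ 1) ∧
        ∫ x, h x * f x ∂μ = ((∫ x, ‖f x‖ ∂μ : ℝ) : ℂ)) ↔
      ((∀ᵐ x ∂μ, f x ≠ 0 → h x = (starRingEnd ℂ) (csgn (f x))) ∧
        (∀ᵐ x ∂μ, f x = 0 → ‖h x‖ ≤ 1)) := by
  calc _ ↔ (∀ᵐ x ∂μ, ‖h x‖ ≤ 1) ∧ (fun x => h x * f x) =ᵐ[μ] fun x => (‖f x‖ : ℂ) :=
        and_congr_right (integral_mul_eq_integral_norm_iff hf hh.aestronglyMeasurable)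
    _ ↔ ∀ᵐ x ∂μ, ‖h x‖ ≤ 1 ∧ h x * f x = ‖f x‖ := eventually_and.symm
    _ ↔ ∀ᵐ x ∂μ, (f x ≠ 0 → h x = conj (csgn (f x))) ∧ (f x = 0 → ‖h x‖ ≤ 1) := by
        simp only [norm_le_one_and_mul_eq_norm_iff]
    _ ↔ _ := eventually_and

/-- **Norming functionals in `L¹`.** For integrable `f` which is not a.e. zero and
measurable `h`, one has `|h| ≤ 1` a.e. and `∫ h f dμ = ‖f‖₁` iff `h = conj (sgn f)`
a.e. where `f ≠ 0` and `|h| ≤ 1` a.e. where `f = 0`. -/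
theorem norming_functional_L1 (X : Type*) [MeasurableSpace X] (μ : Measure X)
    (f : X → ℂ) (hf : Integrable f μ) (hf0 : ¬ f =ᵐ[μ] 0)
    (h : X → ℂ) (hh : Measurable h) :
    ((∀ᵐ x ∂μ, ‖h x‖ ≤ 1) ∧
        ∫ x, h x * f x ∂μ = ((∫ x, ‖f x‖ ∂μ : ℝ) : ℂ)) ↔
      ((∀ᵐ x ∂μ, f x ≠ 0 → h x = (starRingEnd ℂ) (csgn (f x))) ∧
        (∀ᵐ x ∂μ, f x = 0 → ‖h x‖ ≤ 1)) :=
  norming_functional_L1_general X μ f hf h hh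
end

section
/- Let (X, Σ, λ) be a σ-finite measure space and let f ∈ L¹(X, λ) be nonzero (i.e., f is not λ-almost everywhere zero). Then f is a smooth point of L¹(X, λ) if and only if f(x) ≠ 0 for λ-almost every x ∈ X. -/
/-!
A functional `ψ` with `‖ψ‖ ≤ 1` and `ψ f = ‖f‖` is squeezed below the norm along every line
`t ↦ f + t • g`, so wherever the norm is differentiable in the direction `g` its derivative is
`re (ψ g)`; if this holds for every `g`, then `ψ` is unique. In `L¹` the norm is
`∫ ‖f x + t • g x‖`, which is differentiable in `t` at `0` as soon as `f` vanishes only on a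
null set. Conversely, integration against `conj (f x) / ‖f x‖` norms `f`, and on the zero set
of `f` this multiplier may be replaced by any constant of modulus at most one; if the zero set
has positive measure, different constants give different norming functionals.
-/

open MeasureTheory Filter ENNReal RCLike ComplexConjugate

section NormingFunctional

variable {𝕜 E : Type*} [RCLike 𝕜] [NormedAddCommGroup E] [NormedSpace 𝕜 E]

theorem ContinuousLinearMap.ext_re {ψ₁ ψ₂ : E →L[𝕜] 𝕜} (h : ∀ g, re (ψ₁ g) = re (ψ₂ g)) :
    ψ₁ = ψ₂ :=
  ext fun g => RCLike.ext (h g) <| by simpa [I_mul_re] using h ((I : 𝕜) • g)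

theorem ContinuousLinearMap.norm_eq_one_of_apply_eq_norm {ψ : E →L[𝕜] 𝕜} {f : E} (hf : f ≠ 0)
    (hψ : ‖ψ‖ ≤ 1) (hψf : ψ f = ‖f‖) : ‖ψ‖ = 1 := by
  refine hψ.antisymm <| (le_mul_iff_one_le_left (norm_pos_iff.mpr hf)).mp ?_
  simpa [hψf] using ψ.le_opNorm f

theorem ContinuousLinearMap.re_apply_eq_deriv_norm_add_smul {ψ : E →L[𝕜] 𝕜} {f g : E}
    (hψ : ‖ψ‖ ≤ 1) (hψf : ψ f = ‖f‖)
    (hd : DifferentiableAt ℝ (fun t : ℝ => ‖f + (t : 𝕜) • g‖) 0) :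
    re (ψ g) = deriv (fun t : ℝ => ‖f + (t : 𝕜) • g‖) 0 := by
  have hmin : IsLocalMin (fun t : ℝ => ‖f + (t : 𝕜) • g‖ - (‖f‖ + t * re (ψ g))) 0 :=
    Eventually.of_forall fun t => by
      have : ‖f‖ + t * re (ψ g) ≤ ‖f + (t : 𝕜) • g‖ :=
        calc ‖f‖ + t * re (ψ g) = re (ψ (f + (t : 𝕜) • g)) := by simp [hψf]
          _ ≤ ‖ψ (f + (t : 𝕜) • g)‖ := re_le_norm _
          _ ≤ ‖f + (t : 𝕜) • g‖ := ψ.le_of_opNorm_le hψ _ |>.trans_eq (one_mul _)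
      simpa using this
  have hderiv := hd.hasDerivAt.sub (((hasDerivAt_id (0 : ℝ)).mul_const (re (ψ g))).const_add ‖f‖)
  linarith [hmin.hasDerivAt_eq_zero hderiv]

theorem ContinuousLinearMap.eq_of_apply_eq_norm_of_differentiableAt {ψ₁ ψ₂ : E →L[𝕜] 𝕜} {f : E}
    (hd : ∀ g, DifferentiableAt ℝ (fun t : ℝ => ‖f + (t : 𝕜) • g‖) 0)
    (hψ₁ : ‖ψ₁‖ ≤ 1) (hψ₁f : ψ₁ f = ‖f‖) (hψ₂ : ‖ψ₂‖ ≤ 1) (hψ₂f : ψ₂ f = ‖f‖) : ψ₁ = ψ₂ :=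
  ext_re fun g => (ψ₁.re_apply_eq_deriv_norm_add_smul hψ₁ hψ₁f (hd g)).trans
    (ψ₂.re_apply_eq_deriv_norm_add_smul hψ₂ hψ₂f (hd g)).symm

end NormingFunctional

theorem hasDerivAt_norm_add_smul {F : Type*} [NormedAddCommGroup F] [InnerProductSpace ℝ F]
    {z : F} (hz : z ≠ 0) (w : F) :
    HasDerivAt (fun t : ℝ => ‖z + t • w‖) (inner ℝ z w / ‖z‖) 0 := by
  have h := (((hasDerivAt_id (0 : ℝ)).smul_const w).const_add z).norm_sq.sqrt
    (by simpa using hz)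
  simpa [Real.sqrt_sq, mul_div_mul_left _ _ (two_ne_zero (α := ℝ))] using h

namespace RCLike

variable {𝕜 : Type*} [RCLike 𝕜]

noncomputable def conjSign (c z : 𝕜) : 𝕜 :=
  if z = 0 then c else conj z / ‖z‖

theorem measurable_conjSign (c : 𝕜) : Measurable (conjSign c) :=
  Measurable.ite (measurableSet_singleton 0) measurable_const
    (continuous_conj.measurable.div (continuous_ofReal.measurable.comp measurable_norm))

theorem norm_conjSign_le {c : 𝕜} (hc : ‖c‖ ≤ 1) (z : 𝕜) : ‖conjSign c z‖ ≤ 1 := by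
  unfold conjSign
  split_ifs with hz
  · exact hc
  · simp [norm_ne_zero_iff.mpr hz]

theorem conjSign_mul_self (c z : 𝕜) : conjSign c z * z = ‖z‖ := by
  unfold conjSign
  split_ifs with hz
  · simp [hz]
  · rw [div_mul_eq_mul_div, conj_mul, sq, mul_div_cancel_right₀ _ (ofReal_ne_zero.mpr
      (norm_ne_zero_iff.mpr hz))]

end RCLike

namespace MeasureTheory.L1

variable {X : Type*} [MeasurableSpace X] {μ : Measure X}

theorem norm_add_smul_eq_integral {F : Type*} [NormedAddCommGroup F] [NormedSpace ℝ F]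
    (f g : Lp F 1 μ) (t : ℝ) : ‖f + t • g‖ = ∫ x, ‖f x + t • g x‖ ∂μ := by
  rw [L1.norm_eq_integral_norm]
  refine integral_congr_ae ?_
  filter_upwards [Lp.coeFn_add f (t • g), Lp.coeFn_smul t g] with x hadd hsmul
  simp only [hadd, Pi.add_apply, hsmul, Pi.smul_apply]

theorem hasDerivAt_norm_add_smul {F : Type*} [NormedAddCommGroup F] [InnerProductSpace ℝ F]
    {f : Lp F 1 μ} (hf : ∀ᵐ x ∂μ, f x ≠ 0) (g : Lp F 1 μ) :
    HasDerivAt (fun t : ℝ => ‖f + t • g‖) (∫ x, inner ℝ (f x) (g x) / ‖f x‖ ∂μ) 0 := by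
  have hfm := Lp.aestronglyMeasurable f
  have hgm := Lp.aestronglyMeasurable g
  simp_rw [norm_add_smul_eq_integral]
  refine (hasDerivAt_integral_of_dominated_loc_of_lip (x₀ := 0) (bound := fun x => ‖g x‖)
    univ_mem (Eventually.of_forall fun t => (hfm.add (hgm.const_smul t)).norm)
    (by simpa using (L1.integrable_coeFn f).norm) ((hfm.inner hgm).div₀ hfm.norm)
    (Eventually.of_forall fun x => ?_) (L1.integrable_coeFn g).norm
    (hf.mono fun x hx => _root_.hasDerivAt_norm_add_smul hx (g x))).2
  refine LipschitzWith.lipschitzOnWith <| LipschitzWith.of_dist_le_mul fun s t => ?_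
  simpa [dist_eq_norm, ← sub_smul, norm_smul, mul_comm] using
    abs_norm_sub_norm_le (f x + s • g x) (f x + t • g x)

variable {𝕜 : Type*} [RCLike 𝕜]

noncomputable def integralMulCLM {h : X → 𝕜} (hh : MemLp h ∞ μ) : Lp 𝕜 1 μ →L[𝕜] 𝕜 :=
  (ContinuousLinearMap.mul 𝕜 𝕜).lpPairing μ ∞ 1 (hh.toLp h)

theorem integralMulCLM_apply {h : X → 𝕜} (hh : MemLp h ∞ μ) (g : Lp 𝕜 1 μ) :
    integralMulCLM hh g = ∫ x, h x * g x ∂μ := by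
  rw [integralMulCLM, ContinuousLinearMap.lpPairing_eq_integral]
  exact integral_congr_ae <| hh.coeFn_toLp.mono fun x hx => by simp [hx]

theorem norm_integralMulCLM_le {h : X → 𝕜} (hh : MemLp h ∞ μ) {C : ℝ} (hC : 0 ≤ C)
    (hbound : ∀ᵐ x ∂μ, ‖h x‖ ≤ C) : ‖integralMulCLM hh‖ ≤ C := by
  refine ContinuousLinearMap.opNorm_le_bound _ hC fun g => ?_
  rw [integralMulCLM_apply, L1.norm_eq_integral_norm, ← integral_const_mul]
  refine (norm_integral_le_integral_norm _).trans <| integral_mono_ae ?_ ?_ ?_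
  · exact ((L1.integrable_coeFn g).bdd_mul hh.1 hbound).norm
  · exact (L1.integrable_coeFn g).norm.const_mul C
  · filter_upwards [hbound] with x hx
    rw [norm_mul]
    exact mul_le_mul_of_nonneg_right hx (norm_nonneg _)

theorem integralMulCLM_apply_eq_norm {h : X → 𝕜} (hh : MemLp h ∞ μ) {f : Lp 𝕜 1 μ}
    (hhf : ∀ᵐ x ∂μ, h x * f x = ‖f x‖) : integralMulCLM hh f = ‖f‖ := by
  rw [integralMulCLM_apply, integral_congr_ae hhf, integral_ofReal, L1.norm_eq_integral_norm]

theorem memLp_conjSign_comp (f : Lp 𝕜 1 μ) {c : 𝕜} (hc : ‖c‖ ≤ 1) :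
    MemLp (conjSign c ∘ f) ∞ μ :=
  memLp_top_of_bound ((measurable_conjSign c).comp_aemeasurable
    (Lp.aestronglyMeasurable f).aemeasurable).aestronglyMeasurable 1
    (Eventually.of_forall fun x => norm_conjSign_le hc (f x))

noncomputable def normingCLM (f : Lp 𝕜 1 μ) (c : 𝕜) (hc : ‖c‖ ≤ 1) : Lp 𝕜 1 μ →L[𝕜] 𝕜 :=
  integralMulCLM (memLp_conjSign_comp f hc)

theorem normingCLM_apply_self (f : Lp 𝕜 1 μ) {c : 𝕜} (hc : ‖c‖ ≤ 1) :
    normingCLM f c hc f = ‖f‖ :=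
  integralMulCLM_apply_eq_norm _ (Eventually.of_forall fun x => conjSign_mul_self c (f x))

theorem norm_normingCLM {f : Lp 𝕜 1 μ} (hf : f ≠ 0) {c : 𝕜} (hc : ‖c‖ ≤ 1) :
    ‖normingCLM f c hc‖ = 1 :=
  ContinuousLinearMap.norm_eq_one_of_apply_eq_norm hf
    (norm_integralMulCLM_le _ zero_le_one (Eventually.of_forall fun x => norm_conjSign_le hc (f x)))
    (normingCLM_apply_self f hc)

theorem normingCLM_indicatorConstLp (f : Lp 𝕜 1 μ) {c : 𝕜} (hc : ‖c‖ ≤ 1) {E : Set X}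
    (hE : MeasurableSet E) (hμE : μ E ≠ ∞) (hfE : ∀ x ∈ E, f x = 0) :
    normingCLM f c hc (indicatorConstLp 1 hE hμE 1) = μ.real E * c := by
  rw [normingCLM, integralMulCLM_apply, ← real_smul_eq_coe_mul, ← integral_indicator_const c hE]
  refine integral_congr_ae ?_
  filter_upwards [indicatorConstLp_coeFn (p := 1) (hs := hE) (hμs := hμE) (c := (1 : 𝕜))] with x hx
  by_cases hxE : x ∈ E
  · simp [hx, hxE, hfE x hxE, conjSign]
  · simp [hx, hxE]

theorem normingCLM_zero_ne_one [SigmaFinite μ] {f : Lp 𝕜 1 μ} (hzero : μ {x | f x = 0} ≠ 0) :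
    normingCLM f 0 (by simp) ≠ normingCLM f 1 (by simp) := by
  obtain ⟨E, hE, hEf, hμE, hμEfin⟩ := Measure.exists_subset_measure_lt_top
    ((Lp.stronglyMeasurable f).measurable (measurableSet_singleton 0)) hzero.bot_lt
  intro heq
  have hval := congr($heq (indicatorConstLp 1 hE hμEfin.ne 1))
  simp only [normingCLM_indicatorConstLp f _ hE hμEfin.ne hEf, mul_zero, mul_one] at hval
  exact (ENNReal.toReal_pos hμE.ne' hμEfin.ne).ne' (ofReal_eq_zero.mp hval.symm)

end MeasureTheory.L1

/-- **Smooth points of `L¹`.** For a σ-finite measure space and nonzero `f ∈ L¹(X, μ)`,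
`f` is a smooth point iff `f x ≠ 0` for almost every `x`. -/
theorem smooth_points_L1 (X : Type*) [MeasurableSpace X] (μ : Measure X) [SigmaFinite μ]
    (f : Lp ℂ 1 μ) (hf : f ≠ 0) :
    (∃! ψ : Lp ℂ 1 μ →L[ℂ] ℂ, ‖ψ‖ = 1 ∧ ψ f = (‖f‖ : ℂ)) ↔
      (∀ᵐ x ∂μ, f x ≠ 0) := by
  have h₀ : ‖(0 : ℂ)‖ ≤ 1 := by simp
  have h₁ : ‖(1 : ℂ)‖ ≤ 1 := by simp
  constructor
  · intro huniq
    by_contra hzero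
    exact L1.normingCLM_zero_ne_one (by simpa [ae_iff] using hzero) <|
      huniq.unique ⟨L1.norm_normingCLM hf h₀, L1.normingCLM_apply_self f h₀⟩
        ⟨L1.norm_normingCLM hf h₁, L1.normingCLM_apply_self f h₁⟩
  · intro hne
    refine ⟨L1.normingCLM f 0 h₀, ⟨L1.norm_normingCLM hf h₀, L1.normingCLM_apply_self f h₀⟩,
      fun ψ hψ => ContinuousLinearMap.eq_of_apply_eq_norm_of_differentiableAt (fun g => ?_)
        hψ.1.le hψ.2 (L1.norm_normingCLM hf h₀).le (L1.normingCLM_apply_self f h₀)⟩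
    simpa only [← real_smul_eq_coe_smul] using (L1.hasDerivAt_norm_add_smul hne g).differentiableAt
end

section
/- Let (X, Σ, λ) be a σ-finite measure space and let f ∈ L¹(X, λ) be nonzero (i.e., f is not λ-almost everywhere zero). Then f is a right-symmetric point of L¹(X, λ) if and only if there exists a λ-atom A such that f(x) = 0 for λ-almost every x ∈ X \ A. -/
/-!
If `f` vanishes off an atom `A`, every integrable function is a.e. constant on `A`, and an `h`
equal to the constant `a` on `A` has `‖h‖₁ = ‖a‖ μ(A) + ∫_{Aᶜ} ‖h‖`. Then `g ⊥ f` forces `g = 0`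
on `A` (subtract the multiple of `f` that cancels `g` on `A`), after which `f ⊥ g` is clear.

Conversely, if the support of `f` splits into two parts of positive measure, take the part `B`
carrying at most half of `‖f‖₁` and shrink it to `E = B ∩ {δ ≤ ‖f‖}`, which still has positive
measure for small `δ > 0` and has finite measure by Chebyshev. For `g = 1_E · f / ‖f‖`, adding
`c f` to `g` loses at most `‖c‖ ∫_E ‖f‖` on `E` and gains `‖c‖ ∫_{Eᶜ} ‖f‖` off `E`, so `g ⊥ f`;
but `‖f - δ g‖₁ = ‖f‖₁ - δ μ(E) < ‖f‖₁`.
-/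

open MeasureTheory

def BirkhoffJamesOrthogonal (𝕜 : Type*) {E : Type*} [Norm E] [Add E] [SMul 𝕜 E] (x y : E) :
    Prop :=
  ∀ c : 𝕜, ‖x‖ ≤ ‖x + c • y‖

def IsRightSymmetric (𝕜 : Type*) {E : Type*} [Norm E] [Add E] [SMul 𝕜 E] (x : E) : Prop :=
  ∀ y, BirkhoffJamesOrthogonal 𝕜 y x → BirkhoffJamesOrthogonal 𝕜 x y

section

variable {X : Type*} [MeasurableSpace X] {μ : Measure X} {A : Set X}

theorem IsMeasAtom.exists_ae_eq_const_s16 {β : Type*} [Nonempty β] [MeasurableSpace β]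
    [MeasurableSpace.CountablySeparated β] (hA : IsMeasAtom μ A) {u : X → β}
    (hu : Measurable u) : ∃ b, ∀ᵐ x ∂μ.restrict A, u x = b := by
  refine Filter.exists_eventuallyEq_const_of_forall_separating MeasurableSet fun U hU => ?_
  simp only [ae_restrict_iff' hA.1]
  rcases hA.2.2 (A ∩ u ⁻¹' U) Set.inter_subset_left (hA.1.inter (hu hU)) with h | h
  · exact Or.inr <| (measure_eq_zero_iff_ae_notMem.1 h).mono fun x hx hxA hxU => hx ⟨hxA, hxU⟩
  · exact Or.inl <| (measure_eq_zero_iff_ae_notMem.1 h).mono fun x hx hxA =>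
      by_contra fun hxU => hx ⟨hxA, fun h => hxU h.2⟩

theorem exists_measure_inter_ge_ne_zero {v : X → ℝ} {B : Set X} (hB : μ B ≠ 0)
    (hv : ∀ x ∈ B, 0 < v x) : ∃ δ > 0, μ (B ∩ {x | δ ≤ v x}) ≠ 0 := by
  by_contra! h
  refine hB (measure_mono_null (fun x hx => ?_)
    (measure_iUnion_null fun n : ℕ => h (1 / (n + 1)) Nat.one_div_pos_of_nat))
  obtain ⟨n, hn⟩ := exists_nat_one_div_lt (hv x hx)
  exact Set.mem_iUnion.2 ⟨n, hx, hn.le⟩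

end

section signIndicator

variable {𝕜 : Type*} [RCLike 𝕜] {X : Type*}

theorem norm_sub_mul_inv_norm_smul (z : 𝕜) {t : ℝ} (ht : 0 ≤ t) (htz : t ≤ ‖z‖) :
    ‖z - t * ((‖z‖⁻¹ : 𝕜) • z)‖ = ‖z‖ - t := by
  rcases eq_or_ne z 0 with rfl | hz
  · simp [le_antisymm (by simpa using htz) ht]
  have hz' : ‖z‖ ≠ 0 := norm_ne_zero_iff.2 hz
  have hfactor : z - t * ((‖z‖⁻¹ : 𝕜) • z) = ((1 - t / ‖z‖ : ℝ) : 𝕜) * z := by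
    push_cast; rw [smul_eq_mul]; ring
  rw [hfactor, norm_mul, RCLike.norm_ofReal, abs_of_nonneg, sub_mul, div_mul_cancel₀ _ hz',
    one_mul]
  rwa [sub_nonneg, div_le_one (norm_pos_iff.2 hz)]

noncomputable def signIndicator (E : Set X) (f : X → 𝕜) : X → 𝕜 :=
  E.indicator fun x => (‖f x‖⁻¹ : 𝕜) • f x

variable {E : Set X} {f : X → 𝕜}

theorem norm_signIndicator (hf : ∀ x ∈ E, f x ≠ 0) (x : X) :
    ‖signIndicator E f x‖ = E.indicator 1 x := by
  by_cases hx : x ∈ E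
  · simp only [signIndicator, Set.indicator_of_mem hx, Pi.one_apply]
    exact norm_smul_inv_norm (hf x hx)
  · simp [signIndicator, Set.indicator_of_notMem hx]

variable [MeasurableSpace X] {μ : Measure X}

theorem integrable_signIndicator (hE : MeasurableSet E) (hμE : μ E ≠ ⊤) (hfm : Measurable f)
    (hf : ∀ x ∈ E, f x ≠ 0) : Integrable (signIndicator E f) μ :=
  ((integrable_indicator_iff hE).2 (integrableOn_const hμE)).mono'
    (by unfold signIndicator; fun_prop (disch := exact hE) : Measurable _).aestronglyMeasurable
    (.of_forall fun x => (norm_signIndicator hf x).le)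

theorem integral_norm_signIndicator (hE : MeasurableSet E) (hf : ∀ x ∈ E, f x ≠ 0) :
    ∫ x, ‖signIndicator E f x‖ ∂μ = μ.real E := by
  simp_rw [norm_signIndicator hf, integral_indicator_one hE]

theorem measureReal_le_integral_norm_signIndicator_add_mul (hE : MeasurableSet E)
    (hμE : μ E ≠ ⊤) (hfm : Measurable f) (hfi : Integrable f μ) (hf : ∀ x ∈ E, f x ≠ 0)
    (hmass : ∫ x in E, ‖f x‖ ∂μ ≤ ∫ x in Eᶜ, ‖f x‖ ∂μ) (c : 𝕜) :
    μ.real E ≤ ∫ x, ‖signIndicator E f x + c * f x‖ ∂μ := by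
  have hint : Integrable (fun x => signIndicator E f x + c * f x) μ :=
    (integrable_signIndicator hE hμE hfm hf).add (hfi.const_mul c)
  have hon : μ.real E - ‖c‖ * ∫ x in E, ‖f x‖ ∂μ ≤
      ∫ x in E, ‖signIndicator E f x + c * f x‖ ∂μ := by
    have hlow : IntegrableOn (fun x => 1 - ‖c‖ * ‖f x‖) E μ :=
      (integrableOn_const hμE).sub (hfi.norm.const_mul _).integrableOn
    calc μ.real E - ‖c‖ * ∫ x in E, ‖f x‖ ∂μ = ∫ x in E, (1 - ‖c‖ * ‖f x‖) ∂μ := by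
          rw [integral_sub (integrableOn_const hμE : IntegrableOn (fun _ => (1 : ℝ)) E μ)
              (hfi.norm.const_mul _).integrableOn,
            setIntegral_const, integral_const_mul, smul_eq_mul, mul_one]
      _ ≤ ∫ x in E, ‖signIndicator E f x + c * f x‖ ∂μ := by
          refine setIntegral_mono_on hlow hint.norm.integrableOn hE fun x hx => ?_
          have h := norm_sub_le_norm_add (signIndicator E f x) (c * f x)
          rwa [norm_signIndicator hf, Set.indicator_of_mem hx, Pi.one_apply, norm_mul] at h
  have hoff : ∫ x in Eᶜ, ‖signIndicator E f x + c * f x‖ ∂μ = ‖c‖ * ∫ x in Eᶜ, ‖f x‖ ∂μ := by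
    rw [← integral_const_mul]
    refine setIntegral_congr_fun hE.compl fun x hx => ?_
    simp [signIndicator, Set.indicator_of_notMem hx]
  rw [← integral_add_compl hE hint.norm, hoff]
  nlinarith [norm_nonneg c]

theorem integral_norm_sub_mul_signIndicator (hE : MeasurableSet E) (hμE : μ E ≠ ⊤)
    (hfi : Integrable f μ) {δ : ℝ} (hδ : 0 ≤ δ) (hfδ : ∀ x ∈ E, δ ≤ ‖f x‖) :
    ∫ x, ‖f x - δ * signIndicator E f x‖ ∂μ = ∫ x, ‖f x‖ ∂μ - δ * μ.real E := by
  have hpt (x : X) : ‖f x - δ * signIndicator E f x‖ = ‖f x‖ - δ * E.indicator 1 x := by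
    by_cases hx : x ∈ E
    · simp only [signIndicator, Set.indicator_of_mem hx, Pi.one_apply, mul_one]
      exact norm_sub_mul_inv_norm_smul (f x) hδ (hfδ x hx)
    · simp [signIndicator, Set.indicator_of_notMem hx]
  simp_rw [hpt]
  have hind : Integrable (E.indicator 1) μ :=
    (integrable_indicator_iff hE).2 (integrableOn_const hμE (C := (1 : ℝ)))
  rw [integral_sub hfi.norm (hind.const_mul δ), integral_const_mul, integral_indicator_one hE]

end signIndicator

namespace MeasureTheory.L1

variable {𝕜 : Type*} [RCLike 𝕜] {X : Type*} [MeasurableSpace X] {μ : Measure X} {A E : Set X}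

theorem norm_add_smul_eq_integral_s16 (u v : Lp 𝕜 1 μ) (c : 𝕜) :
    ‖u + c • v‖ = ∫ x, ‖u x + c * v x‖ ∂μ := by
  rw [L1.norm_eq_integral_norm]
  refine integral_congr_ae ?_
  filter_upwards [Lp.coeFn_add u (c • v), Lp.coeFn_smul c v] with x hadd hsmul
  rw [hadd, Pi.add_apply, hsmul, Pi.smul_apply, smul_eq_mul]

theorem norm_add_smul_eq_of_ae_restrict_eq_const (hA : MeasurableSet A) {u v : Lp 𝕜 1 μ}
    {a b : 𝕜} (hu : ∀ᵐ x ∂μ.restrict A, u x = a) (hv : ∀ᵐ x ∂μ.restrict A, v x = b) (c : 𝕜) :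
    ‖u + c • v‖ = ‖a + c * b‖ * μ.real A + ∫ x in Aᶜ, ‖u x + c * v x‖ ∂μ := by
  have hint : Integrable (fun x => u x + c * v x) μ :=
    (L1.integrable_coeFn u).add ((L1.integrable_coeFn v).const_mul c)
  rw [norm_add_smul_eq_integral_s16, ← integral_add_compl hA hint.norm,
    integral_congr_ae (g := fun _ => ‖a + c * b‖)
      (by filter_upwards [hu, hv] with x hux hvx; rw [hux, hvx]),
    setIntegral_const, smul_eq_mul, mul_comm]

theorem isRightSymmetric_of_isMeasAtom {f : Lp 𝕜 1 μ} (hf : f ≠ 0)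
    (hA : IsMeasAtom μ A) (hfA : ∀ᵐ x ∂μ.restrict Aᶜ, f x = 0) : IsRightSymmetric 𝕜 f := by
  intro g hgf c
  obtain ⟨α, hα⟩ := hA.exists_ae_eq_const_s16 (Lp.stronglyMeasurable f).measurable
  obtain ⟨β, hβ⟩ := hA.exists_ae_eq_const_s16 (Lp.stronglyMeasurable g).measurable
  have hα0 : α ≠ 0 := by
    rintro rfl
    have hf0 := (ae_restrict_union_iff A Aᶜ _).2 ⟨hα, hfA⟩
    rw [Set.union_compl_self, Measure.restrict_univ] at hf0
    exact hf (Lp.eq_zero_iff_ae_eq_zero.2 hf0)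
  have hμA : 0 < μ.real A := by
    have hfinite := (integrableOn_const_iff (C := α)).1
      ((L1.integrable_coeFn f).integrableOn.congr_fun_ae hα)
    exact ENNReal.toReal_pos hA.2.1.ne' (hfinite.resolve_left (by simpa using hα0)).ne
  have hβ0 : β = 0 := by
    have hcompl (c : 𝕜) : ∫ x in Aᶜ, ‖g x + c * f x‖ ∂μ = ∫ x in Aᶜ, ‖g x‖ ∂μ :=
      integral_congr_ae (hfA.mono fun x hx => by simp only [hx, mul_zero, add_zero])
    have hle : ‖g + (0 : 𝕜) • f‖ ≤ ‖g + (-β / α) • f‖ := by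
      simpa only [zero_smul, add_zero] using hgf (-β / α)
    rw [norm_add_smul_eq_of_ae_restrict_eq_const hA.1 hβ hα,
      norm_add_smul_eq_of_ae_restrict_eq_const hA.1 hβ hα,
      hcompl, hcompl,
      div_mul_cancel₀ _ hα0, zero_mul, add_zero, add_neg_cancel, norm_zero, zero_mul] at hle
    exact norm_le_zero_iff.1 <| nonpos_of_mul_nonpos_left (by linarith) hμA
  have hnorm_f : ‖f‖ = ‖α‖ * μ.real A := by
    have hf_compl : ∫ x in Aᶜ, ‖f x‖ ∂μ = 0 :=
      integral_eq_zero_of_ae (hfA.mono fun x hx => by simp [hx])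
    simpa [hf_compl] using norm_add_smul_eq_of_ae_restrict_eq_const hA.1 hα hβ 0
  rw [hnorm_f, norm_add_smul_eq_of_ae_restrict_eq_const hA.1 hα hβ, hβ0, mul_zero, add_zero]
  exact le_add_of_nonneg_right (integral_nonneg fun _ => norm_nonneg _)

theorem not_isRightSymmetric_of_integral_norm_le_compl {f : Lp 𝕜 1 μ} (hE : MeasurableSet E)
    (hμE : μ E ≠ 0) {δ : ℝ} (hδ : 0 < δ) (hfδ : ∀ x ∈ E, δ ≤ ‖f x‖)
    (hmass : ∫ x in E, ‖f x‖ ∂μ ≤ ∫ x in Eᶜ, ‖f x‖ ∂μ) : ¬IsRightSymmetric 𝕜 f := by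
  have hfm : Measurable f := (Lp.stronglyMeasurable f).measurable
  have hfi := L1.integrable_coeFn f
  have hf0 (x : X) (hx : x ∈ E) : f x ≠ 0 := norm_pos_iff.1 (hδ.trans_le (hfδ x hx))
  have hμE_fin : μ E ≠ ⊤ :=
    ((measure_mono hfδ).trans_lt (hfi.measure_norm_ge_lt_top hδ)).ne
  have hs := integrable_signIndicator hE hμE_fin hfm hf0
  have hg (c : 𝕜) : ‖hs.toL1 _ + c • f‖ = ∫ x, ‖signIndicator E f x + c * f x‖ ∂μ := by
    rw [norm_add_smul_eq_integral_s16]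
    exact integral_congr_ae (by filter_upwards [hs.coeFn_toL1] with x hx; rw [hx])
  have hf (c : 𝕜) : ‖f + c • hs.toL1 _‖ = ∫ x, ‖f x + c * signIndicator E f x‖ ∂μ := by
    rw [norm_add_smul_eq_integral_s16]
    exact integral_congr_ae (by filter_upwards [hs.coeFn_toL1] with x hx; rw [hx])
  have hgf : BirkhoffJamesOrthogonal 𝕜 (hs.toL1 _) f := fun c => by
    have hg0 := hg 0
    simp only [zero_smul, add_zero, zero_mul] at hg0
    rw [hg0, hg, integral_norm_signIndicator hE hf0]
    exact measureReal_le_integral_norm_signIndicator_add_mul hE hμE_fin hfm hfi hf0 hmass c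
  intro hsymm
  have hle := hsymm _ hgf (-δ)
  simp_rw [hf, neg_mul, ← sub_eq_add_neg] at hle
  rw [integral_norm_sub_mul_signIndicator hE hμE_fin hfi hδ.le hfδ,
    L1.norm_eq_integral_norm] at hle
  have hμE_pos : 0 < μ.real E := ENNReal.toReal_pos hμE hμE_fin
  nlinarith

theorem not_isRightSymmetric_of_subset_support {f : Lp 𝕜 1 μ} {B : Set X}
    (hB : MeasurableSet B) (hBf : B ⊆ Function.support f) (hμB : μ B ≠ 0)
    (hmass : ∫ x in B, ‖f x‖ ∂μ ≤ ∫ x in Function.support f \ B, ‖f x‖ ∂μ) :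
    ¬IsRightSymmetric 𝕜 f := by
  obtain ⟨δ, hδ, hμE⟩ :=
    exists_measure_inter_ge_ne_zero hμB fun x hx => norm_pos_iff.2 (hBf hx)
  have hfm : Measurable f := (Lp.stronglyMeasurable f).measurable
  have hfi := (L1.integrable_coeFn f).norm
  have hE : MeasurableSet (B ∩ {x | δ ≤ ‖f x‖}) :=
    hB.inter (measurableSet_le measurable_const hfm.norm)
  refine not_isRightSymmetric_of_integral_norm_le_compl hE hμE hδ (fun x hx => hx.2) ?_
  have hnonneg {s : Set X} : 0 ≤ᵐ[μ.restrict s] fun x => ‖f x‖ :=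
    .of_forall fun _ => norm_nonneg _
  calc ∫ x in B ∩ {x | δ ≤ ‖f x‖}, ‖f x‖ ∂μ ≤ ∫ x in B, ‖f x‖ ∂μ :=
        setIntegral_mono_set hfi.integrableOn hnonneg (.of_forall Set.inter_subset_left)
    _ ≤ ∫ x in Function.support f \ B, ‖f x‖ ∂μ := hmass
    _ ≤ ∫ x in (B ∩ {x | δ ≤ ‖f x‖})ᶜ, ‖f x‖ ∂μ :=
        setIntegral_mono_set hfi.integrableOn hnonneg (.of_forall fun x hx hxE => hx.2 hxE.1)

theorem exists_isMeasAtom_of_isRightSymmetric {f : Lp 𝕜 1 μ} (hf : f ≠ 0)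
    (hsymm : IsRightSymmetric 𝕜 f) : ∃ A, IsMeasAtom μ A ∧ ∀ᵐ x ∂μ.restrict Aᶜ, f x = 0 := by
  have hS : MeasurableSet (Function.support f) :=
    measurableSet_support (Lp.stronglyMeasurable f).measurable
  have hμS : 0 < μ (Function.support f) := by
    refine pos_iff_ne_zero.2 fun h => hf (Lp.eq_zero_iff_ae_eq_zero.2 ?_)
    exact measure_eq_zero_iff_ae_notMem.1 h |>.mono fun x hx => Function.notMem_support.1 hx
  refine ⟨_, ⟨hS, hμS, fun B hBS hB => ?_⟩,
    ae_restrict_of_forall_mem hS.compl fun x hx => Function.notMem_support.1 hx⟩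
  by_contra! hB0
  rcases le_total (∫ x in B, ‖f x‖ ∂μ) (∫ x in Function.support f \ B, ‖f x‖ ∂μ) with hle | hle
  · exact not_isRightSymmetric_of_subset_support hB hBS hB0.1 hle hsymm
  · refine not_isRightSymmetric_of_subset_support (hS.diff hB) Set.sdiff_subset hB0.2 ?_ hsymm
    rwa [Set.sdiff_sdiff_cancel_left hBS]

end MeasureTheory.L1

theorem right_symmetric_points_L1_general (X : Type*) [MeasurableSpace X] (μ : Measure X)
    (f : Lp ℂ 1 μ) (hf : f ≠ 0) :
    (∀ g : Lp ℂ 1 μ, (∀ c : ℂ, ‖g‖ ≤ ‖g + c • f‖) → (∀ c : ℂ, ‖f‖ ≤ ‖f + c • g‖)) ↔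
      ∃ A : Set X, IsMeasAtom μ A ∧ (∀ᵐ x ∂μ.restrict Aᶜ, f x = 0) :=
  ⟨L1.exists_isMeasAtom_of_isRightSymmetric hf,
    fun ⟨_, hA, hfA⟩ => L1.isRightSymmetric_of_isMeasAtom hf hA hfA⟩

/-- **Right-symmetric points of `L¹`.** For a σ-finite measure space, a nonzero
`f ∈ L¹(X, μ)` is right-symmetric for Birkhoff-James orthogonality iff there is a
`μ`-atom `A` such that `f = 0` a.e. on `X \ A`. -/
theorem right_symmetric_points_L1 (X : Type*) [MeasurableSpace X] (μ : Measure X)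
    [SigmaFinite μ] (f : Lp ℂ 1 μ) (hf : f ≠ 0) :
    (∀ g : Lp ℂ 1 μ, (∀ c : ℂ, ‖g‖ ≤ ‖g + c • f‖) → (∀ c : ℂ, ‖f‖ ≤ ‖f + c • g‖)) ↔
      ∃ A : Set X, IsMeasAtom μ A ∧ (∀ᵐ x ∂μ.restrict Aᶜ, f x = 0) :=
  right_symmetric_points_L1_general X μ f hf
end
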